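/- arXiv:math/9512216 — 7 statements merged into one kernel-verified Lean document; each statement's English description precedes it below -/
import Mathlib

section
/- Let w ∈ ℂ and suppose g : [-1,1] → ℂ is twice continuously differentiable, not identically zero, satisfies g(-1) = g(1) = 0, and -g''(x) - w·α(x)²·g(x) + β(x)·g(x) = 0 for all x ∈ [-1,1]. Then w is real (Im w = 0). -/
open Set ComplexConjugate

/-!
Multiply the equation by `conj g` and take imaginary parts. Since `Im (g' * conj g')` vanishes,
`Im (g'' * conj g)` is the derivative of `Im (g' * conj g)`, which is zero at both endpoints; so its
integral over `[-1, 1]` is zero. By the equation, that integrand is `-(Im w) α² |g|²`, whose integral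
is positive because `α` does not vanish and `g` is not identically zero.
-/

theorem HasDerivWithinAt.im_deriv_mul_conj {s : Set ℝ} {x : ℝ} {u u' : ℝ → ℂ} {u'' : ℂ}
    (hu : HasDerivWithinAt u (u' x) s x) (hu' : HasDerivWithinAt u' u'' s x) :
    HasDerivWithinAt (fun y ↦ (u' y * conj (u y)).im) (u'' * conj (u x)).im s x := by
  refine (Complex.imCLM.hasFDerivAt.comp_hasDerivWithinAt x (hu'.mul hu.star)).congr_deriv ?_
  simp only [RCLike.star_def, Complex.imCLM_apply, Complex.add_im, Complex.mul_im,
    Complex.conj_im, Complex.conj_re]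
  ring

theorem integral_im_iteratedDerivWithin_two_mul_conj_eq_zero {a b : ℝ} (hab : a < b)
    {u : ℝ → ℂ} (hu : ContDiffOn ℝ 2 u (Icc a b)) (ha : u a = 0) (hb : u b = 0) :
    ∫ x in a..b, (iteratedDerivWithin 2 u (Icc a b) x * conj (u x)).im = 0 := by
  set s := Icc a b
  have hs : UniqueDiffOn ℝ s := uniqueDiffOn_Icc hab
  have hu' : ContDiffOn ℝ 1 (derivWithin u s) s := hu.derivWithin hs (by norm_num)
  have hu'' : iteratedDerivWithin 2 u s = derivWithin (derivWithin u s) s := by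
    ext x; simp [iteratedDerivWithin_eq_iterate]
  rw [hu'', intervalIntegral.integral_eq_sub_of_hasDerivAt_of_le hab.le
    (f := fun y ↦ (derivWithin u s y * conj (u y)).im)]
  · simp [ha, hb]
  · exact Complex.continuous_im.comp_continuousOn
      (hu'.continuousOn.mul (Complex.continuous_conj.comp_continuousOn hu.continuousOn))
  · intro x hx
    have hx' : x ∈ s := Ioo_subset_Icc_self hx
    refine (HasDerivWithinAt.im_deriv_mul_conj ?_ ?_).hasDerivAt (Icc_mem_nhds hx.1 hx.2)
    · exact ((hu.differentiableOn (by norm_num)) x hx').hasDerivWithinAt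
    · exact ((hu'.differentiableOn one_ne_zero) x hx').hasDerivWithinAt
  · refine ContinuousOn.intervalIntegrable_of_Icc hab.le ?_
    exact Complex.continuous_im.comp_continuousOn ((hu'.continuousOn_derivWithin hs le_rfl).mul
      (Complex.continuous_conj.comp_continuousOn hu.continuousOn))

theorem stmt0_general (α β : ℝ → ℝ)
    (hα : ContinuousOn α (Icc (-1) 1))
    (hα0 : ∀ x ∈ Icc (-1 : ℝ) 1, α x ≠ 0)
    (w : ℂ) (g : ℝ → ℂ)
    (hg : ContDiffOn ℝ 2 g (Icc (-1) 1))
    (hg0 : ∃ x ∈ Icc (-1 : ℝ) 1, g x ≠ 0)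
    (hgm : g (-1) = 0) (hgp : g 1 = 0)
    (hode : ∀ x ∈ Icc (-1 : ℝ) 1,
      -(iteratedDerivWithin 2 g (Icc (-1) 1) x) - w * ((α x : ℂ)) ^ 2 * g x
        + (β x : ℂ) * g x = 0) :
    w.im = 0 := by
  have h_im : ∀ x ∈ uIcc (-1 : ℝ) 1, (iteratedDerivWithin 2 g (Icc (-1) 1) x * conj (g x)).im
      = -w.im * (α x ^ 2 * Complex.normSq (g x)) := by
    intro x hx
    rw [uIcc_of_le (by norm_num)] at hx
    rw [show iteratedDerivWithin 2 g (Icc (-1) 1) x = ((β x : ℂ) - w * (α x : ℂ) ^ 2) * g x by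
      linear_combination -hode x hx, mul_assoc, Complex.mul_conj]
    simp only [← Complex.ofReal_pow, Complex.mul_im, Complex.sub_re, Complex.ofReal_re,
      Complex.mul_re, Complex.ofReal_im, mul_zero, sub_zero, Complex.sub_im, zero_add, zero_sub]
    ring
  have h_energy := integral_im_iteratedDerivWithin_two_mul_conj_eq_zero (by norm_num) hg hgm hgp
  rw [intervalIntegral.integral_congr h_im, intervalIntegral.integral_const_mul] at h_energy
  have h_pos : 0 < ∫ x in (-1 : ℝ)..1, α x ^ 2 * Complex.normSq (g x) := by
    obtain ⟨x, hx, hgx⟩ := hg0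
    refine intervalIntegral.integral_pos (by norm_num)
      ((hα.pow 2).mul (Complex.continuous_normSq.comp_continuousOn hg.continuousOn))
      (fun y _ ↦ mul_nonneg (sq_nonneg _) (Complex.normSq_nonneg _)) ⟨x, hx, ?_⟩
    exact mul_pos (by have := hα0 x hx; positivity) (Complex.normSq_pos.mpr hgx)
  simpa [h_pos.ne'] using h_energy

/-- If `g : [-1,1] → ℂ` is a nontrivial twice continuously differentiable
solution of the Dirichlet problem `-g'' - w·α²·g + β·g = 0`, `g(±1) = 0`, where `α, β` are
continuous real-valued functions on `[-1,1]` with `α` nonvanishing, then `w` is real. -/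
theorem stmt0 (α β : ℝ → ℝ)
    (hα : ContinuousOn α (Icc (-1) 1)) (hβ : ContinuousOn β (Icc (-1) 1))
    (hα0 : ∀ x ∈ Icc (-1 : ℝ) 1, α x ≠ 0)
    (w : ℂ) (g : ℝ → ℂ)
    (hg : ContDiffOn ℝ 2 g (Icc (-1) 1))
    (hg0 : ∃ x ∈ Icc (-1 : ℝ) 1, g x ≠ 0)
    (hgm : g (-1) = 0) (hgp : g 1 = 0)
    (hode : ∀ x ∈ Icc (-1 : ℝ) 1,
      -(iteratedDerivWithin 2 g (Icc (-1) 1) x) - w * ((α x : ℂ)) ^ 2 * g x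
        + (β x : ℂ) * g x = 0) :
    w.im = 0 :=
  stmt0_general α β hα hα0 w g hg hg0 hgm hgp hode
end

section
/- Let w ∈ ℂ and suppose g : [-1,1] → ℂ is twice continuously differentiable, not identically zero, satisfies g(-1) = g(1) = 0, and -g''(x) - w·α(x)²·g(x) + β(x)·g(x) = 0 for all x ∈ [-1,1]. Then Re(w) ≥ -(sup_{x∈[-1,1]}|β(x)|)/(inf_{x∈[-1,1]} α(x)²). -/
open Set Filter

open scoped RealInnerProductSpace Topology

/-!
At a point `x₀` where `‖g‖` is maximal, `g x₀ ≠ 0`, so `x₀` is interior by the boundary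
conditions, and the second derivative of `‖g‖² = ⟪g, g⟫` there is
`2 ⟪g'', g⟫ + 2 ‖g'‖² ≤ 0`. Since `g'' = (β - w α²) g`, this gives
`(β x₀ - Re w · α x₀²) ‖g x₀‖² ≤ 0`, i.e. `β x₀ ≤ Re w · α x₀²`, and then
`-sup |β| / inf α² ≤ -|β x₀| / α x₀² ≤ Re w`.
-/

/-- If `f'' x₀ > 0`, the second-derivative test makes `x₀` a local minimum as well, so `f` is
locally constant and `f'' x₀ = 0`. -/
theorem IsLocalMax.deriv_deriv_nonpos {f : ℝ → ℝ} {x₀ : ℝ} (hmax : IsLocalMax f x₀)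
    (hf : ContinuousAt f x₀) : deriv (deriv f) x₀ ≤ 0 := by
  by_contra! hpos
  have hmin : IsLocalMin f x₀ := isLocalMin_of_deriv_deriv_pos hpos hmax.deriv_eq_zero hf
  have hconst : f =ᶠ[𝓝 x₀] fun _ ↦ f x₀ := by
    filter_upwards [hmax, hmin] with x hle hge using le_antisymm hle hge
  exact hpos.ne' (by rw [hconst.deriv.deriv_eq]; simp)

theorem IsLocalMax.inner_hasDerivAt_hasDerivAt_nonpos {E : Type*} [NormedAddCommGroup E]
    [InnerProductSpace ℝ E] {g g' : ℝ → E} {a : E} {x₀ : ℝ}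
    (hmax : IsLocalMax (fun x ↦ ‖g x‖) x₀) (hg : ∀ᶠ x in 𝓝 x₀, HasDerivAt g (g' x) x)
    (hg' : HasDerivAt g' a x₀) : ⟪a, g x₀⟫ ≤ 0 := by
  set u : ℝ → ℝ := fun x ↦ ⟪g x, g x⟫
  have hu_max : IsLocalMax u x₀ := by
    filter_upwards [hmax] with x hx
    simp only [u, real_inner_self_eq_norm_sq]
    exact pow_le_pow_left₀ (norm_nonneg _) hx 2
  have hg₀ : HasDerivAt g (g' x₀) x₀ := hg.self_of_nhds
  have hu' : deriv u =ᶠ[𝓝 x₀] fun x ↦ ⟪g x, g' x⟫ + ⟪g' x, g x⟫ :=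
    hg.mono fun x hx ↦ (hx.inner ℝ hx).deriv
  have hu'' : deriv (deriv u) x₀ = 2 * ⟪a, g x₀⟫ + 2 * ‖g' x₀‖ ^ 2 := by
    rw [hu'.deriv_eq, ((hg₀.inner ℝ hg').fun_add (hg'.inner ℝ hg₀)).deriv, real_inner_comm _ a,
      real_inner_self_eq_norm_sq]
    ring
  have := hu_max.deriv_deriv_nonpos (hg₀.inner ℝ hg₀).continuousAt
  nlinarith [sq_nonneg ‖g' x₀‖]

theorem Complex.real_inner_mul_self (c v : ℂ) : ⟪c * v, v⟫ = c.re * ‖v‖ ^ 2 := by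
  rw [Complex.inner, Complex.sq_norm, Complex.normSq_apply]
  simp only [map_mul, Complex.mul_re, Complex.mul_im, Complex.conj_re, Complex.conj_im]
  ring

theorem DifferentiableOn.eventually_hasDerivAt_derivWithin {E : Type*} [NormedAddCommGroup E]
    [NormedSpace ℝ E] {f : ℝ → E} {s : Set ℝ} {x : ℝ} (hf : DifferentiableOn ℝ f s)
    (hx : s ∈ 𝓝 x) : ∀ᶠ y in 𝓝 x, HasDerivAt f (derivWithin f s y) y := by
  filter_upwards [eventually_mem_nhds_iff.mpr hx] with y hy
  exact (hf y (mem_of_mem_nhds hy)).hasDerivWithinAt.hasDerivAt hy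

theorem ContDiffOn.hasDerivAt_derivWithin_iteratedDerivWithin_two {E : Type*}
    [NormedAddCommGroup E] [NormedSpace ℝ E] {f : ℝ → E} {s : Set ℝ} {x : ℝ}
    (hf : ContDiffOn ℝ 2 f s) (hs : UniqueDiffOn ℝ s) (hx : s ∈ 𝓝 x) :
    HasDerivAt (derivWithin f s) (iteratedDerivWithin 2 f s x) x := by
  have h1 : ContDiffOn ℝ 1 (derivWithin f s) s := hf.derivWithin hs (by norm_num)
  rw [iteratedDerivWithin_succ, iteratedDerivWithin_one]
  exact (h1.differentiableOn one_ne_zero x (mem_of_mem_nhds hx)).hasDerivWithinAt.hasDerivAt hx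

theorem IsCompact.iInf_pos_of_continuousOn {s : Set ℝ} {f : ℝ → ℝ} (hs : IsCompact s)
    (hne : s.Nonempty) (hf : ContinuousOn f s) (hpos : ∀ x ∈ s, 0 < f x) :
    0 < ⨅ x : s, f x := by
  obtain ⟨z, hz, hmin⟩ := hs.exists_isMinOn hne hf
  have : Nonempty s := hne.to_subtype
  exact (hpos z hz).trans_le (le_ciInf fun x ↦ hmin x.2)

theorem neg_div_le_of_abs_le_of_le_mul {a b r S m : ℝ} (hS : |b| ≤ S) (hm : 0 < m) (hma : m ≤ a)
    (h : b ≤ r * a) : -S / m ≤ r := by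
  have ha : 0 < a := hm.trans_le hma
  calc -S / m ≤ -S / a := by
        rw [neg_div, neg_div, neg_le_neg_iff]
        exact div_le_div_of_nonneg_left ((abs_nonneg b).trans hS) hm hma
    _ ≤ b / a := by gcongr; linarith [neg_abs_le b]
    _ ≤ r := by rwa [div_le_iff₀ ha]

/-- If `g : [-1,1] → ℂ` is a nontrivial twice continuously differentiable
solution of the Dirichlet problem `-g'' - w·α²·g + β·g = 0`, `g(±1) = 0`, where `α, β` are
continuous real-valued functions on `[-1,1]` with `α` nonvanishing, then
`Re w ≥ -(sup |β|) / (inf α²)`. -/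
theorem stmt1 (α β : ℝ → ℝ)
    (hα : ContinuousOn α (Icc (-1) 1)) (hβ : ContinuousOn β (Icc (-1) 1))
    (hα0 : ∀ x ∈ Icc (-1 : ℝ) 1, α x ≠ 0)
    (w : ℂ) (g : ℝ → ℂ)
    (hg : ContDiffOn ℝ 2 g (Icc (-1) 1))
    (hg0 : ∃ x ∈ Icc (-1 : ℝ) 1, g x ≠ 0)
    (hgm : g (-1) = 0) (hgp : g 1 = 0)
    (hode : ∀ x ∈ Icc (-1 : ℝ) 1,
      -(iteratedDerivWithin 2 g (Icc (-1) 1) x) - w * ((α x : ℂ)) ^ 2 * g x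
        + (β x : ℂ) * g x = 0) :
    w.re ≥ -(⨆ x : Icc (-1 : ℝ) 1, |β x|) / (⨅ x : Icc (-1 : ℝ) 1, (α x) ^ 2) := by
  set I := Icc (-1 : ℝ) 1
  obtain ⟨y, hyI, hy⟩ := hg0
  obtain ⟨x₀, hx₀I, hx₀max⟩ := isCompact_Icc.exists_isMaxOn ⟨y, hyI⟩ hg.continuousOn.norm
  have hgx₀ : 0 < ‖g x₀‖ := (norm_pos_iff.mpr hy).trans_le (hx₀max hyI)
  have hI : I ∈ 𝓝 x₀ := by
    refine Icc_mem_nhds (hx₀I.1.lt_of_ne ?_) (hx₀I.2.lt_of_ne ?_) <;> rintro rfl <;>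
      simp [hgm, hgp] at hgx₀
  have hI' : UniqueDiffOn ℝ I := uniqueDiffOn_Icc (by norm_num)
  have hinner := (hx₀max.isLocalMax hI).inner_hasDerivAt_hasDerivAt_nonpos
    ((hg.differentiableOn two_ne_zero).eventually_hasDerivAt_derivWithin hI)
    (hg.hasDerivAt_derivWithin_iteratedDerivWithin_two hI' hI)
  have hg'' : iteratedDerivWithin 2 g I x₀ = (β x₀ - w * α x₀ ^ 2) * g x₀ := by
    linear_combination -hode x₀ hx₀I
  have hβx₀ : β x₀ ≤ w.re * α x₀ ^ 2 := by
    have hre : ((β x₀ : ℂ) - w * α x₀ ^ 2).re = β x₀ - w.re * α x₀ ^ 2 := by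
      simp [← Complex.ofReal_pow]
    rw [hg'', Complex.real_inner_mul_self, hre] at hinner
    linarith [nonpos_of_mul_nonpos_left hinner (by positivity)]
  have hS : |β x₀| ≤ ⨆ x : I, |β x| := by
    refine le_ciSup (f := fun x : I ↦ |β x|) ?_ ⟨x₀, hx₀I⟩
    simpa [image_eq_range] using isCompact_Icc.bddAbove_image hβ.abs
  have hm : 0 < ⨅ x : I, α x ^ 2 := isCompact_Icc.iInf_pos_of_continuousOn ⟨y, hyI⟩ (hα.pow 2)
    fun x hx ↦ sq_pos_of_ne_zero (hα0 x hx)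
  have hmx₀ : ⨅ x : I, α x ^ 2 ≤ α x₀ ^ 2 :=
    ciInf_le (f := fun x : I ↦ α x ^ 2) ⟨0, by rintro _ ⟨x, rfl⟩; positivity⟩ ⟨x₀, hx₀I⟩
  exact neg_div_le_of_abs_le_of_le_mul hS hm hmx₀ hβx₀
end

section
/- Let w ∈ ℂ and suppose g : [-1,1] → ℂ is twice continuously differentiable, not identically zero, satisfies g(-1) = g(1) = 0, and -g''(x) - w·α(x)²·g(x) + β(x)·g(x) = 0 for all x ∈ [-1,1]. If in addition β(x) ≥ 0 for all x ∈ [-1,1], then Re(w) > 0. -/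
/-!
Multiplying the equation by `conj g` and integrating by parts (the boundary terms vanish since
`g(±1) = 0`) gives, after taking real parts,
`∫ |g'|² + ∫ (β - Re w · α²) |g|² = 0`.
The first integral is positive because `g` is not constant, so `Re w ≤ 0` would make the left-hand
side positive.
-/

open Set intervalIntegral ComplexConjugate

section

variable {a b : ℝ}

theorem integral_re_conj_mul_iteratedDerivWithin_two {𝕜 : Type*} [RCLike 𝕜] (hab : a < b)
    {g : ℝ → 𝕜} (hg : ContDiffOn ℝ 2 g (Icc a b)) (ha : g a = 0) (hb : g b = 0) :
    ∫ x in a..b, RCLike.re (conj (g x) * iteratedDerivWithin 2 g (Icc a b) x) =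
      -∫ x in a..b, ‖derivWithin g (Icc a b) x‖ ^ 2 := by
  set s := Icc a b
  have hs : UniqueDiffOn ℝ s := uniqueDiffOn_Icc hab
  have hu : uIcc a b = s := uIcc_of_le hab.le
  have hg' : DifferentiableOn ℝ (derivWithin g s) s := by
    simpa only [iteratedDerivWithin_one] using
      hg.differentiableOn_iteratedDerivWithin (m := 1) (by norm_num) hs
  have hg'' : ContinuousOn (iteratedDerivWithin 2 g s) s :=
    hg.continuousOn_iteratedDerivWithin le_rfl hs
  have hibp : ∫ x in a..b, conj (g x) * iteratedDerivWithin 2 g s x =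
      -∫ x in a..b, conj (derivWithin g s x) * derivWithin g s x := by
    rw [integral_mul_deriv_eq_deriv_mul_of_hasDerivWithinAt (v := derivWithin g s)
      (u' := fun x => conj (derivWithin g s x))]
    · simp [ha, hb]
    · rw [hu]
      exact fun x hx => (hg.differentiableOn (by norm_num) x hx).hasDerivWithinAt.star
    · rw [hu]
      intro x hx
      rw [iteratedDerivWithin_succ, iteratedDerivWithin_one]
      exact (hg' x hx).hasDerivWithinAt
    · exact ((hg.continuousOn_derivWithin hs (by norm_num)).star.mono hu.subset).intervalIntegrable
    · exact (hg''.mono hu.subset).intervalIntegrable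
  have hint : IntervalIntegrable (fun x => conj (g x) * iteratedDerivWithin 2 g s x)
      MeasureTheory.volume a b :=
    ((hg.continuousOn.star.mul hg'').mono hu.subset).intervalIntegrable
  simp_rw [RCLike.conj_mul, ← RCLike.ofReal_pow, RCLike.intervalIntegral_ofReal] at hibp
  simp_rw [← RCLike.reCLM_apply, RCLike.reCLM.intervalIntegral_comp_comm hint, hibp]
  simp

theorem integral_norm_derivWithin_sq_pos {E : Type*} [NormedAddCommGroup E] [NormedSpace ℝ E]
    (hab : a < b) {g : ℝ → E} (hg : DifferentiableOn ℝ g (Icc a b))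
    (hg' : ContinuousOn (derivWithin g (Icc a b)) (Icc a b)) (ha : g a = 0)
    {x₀ : ℝ} (hx₀ : x₀ ∈ Icc a b) (hgx₀ : g x₀ ≠ 0) :
    0 < ∫ x in a..b, ‖derivWithin g (Icc a b) x‖ ^ 2 := by
  refine integral_pos hab (hg'.norm.pow 2) (fun x _ => by positivity) ?_
  by_contra! h
  have hzero : ∀ x ∈ Ico a b, derivWithin g (Icc a b) x = 0 := fun x hx => by
    simpa using le_antisymm (h x (Ico_subset_Icc_self hx)) (by positivity)
  exact hgx₀ ((constant_of_derivWithin_zero hg hzero x₀ hx₀).trans ha)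

end

theorem stmt2_general (α β : ℝ → ℝ)
    (w : ℂ) (g : ℝ → ℂ)
    (hg : ContDiffOn ℝ 2 g (Icc (-1) 1))
    (hg0 : ∃ x ∈ Icc (-1 : ℝ) 1, g x ≠ 0)
    (hgm : g (-1) = 0) (hgp : g 1 = 0)
    (hβ0 : ∀ x ∈ Icc (-1 : ℝ) 1, 0 ≤ β x)
    (hode : ∀ x ∈ Icc (-1 : ℝ) 1,
      -(iteratedDerivWithin 2 g (Icc (-1) 1) x) - w * ((α x : ℂ)) ^ 2 * g x
        + (β x : ℂ) * g x = 0) :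
    0 < w.re := by
  by_contra! hw
  obtain ⟨x₀, hx₀, hgx₀⟩ := hg0
  have h11 : (-1 : ℝ) < 1 := by norm_num
  have hpos := integral_norm_derivWithin_sq_pos h11 (hg.differentiableOn (by norm_num))
    (hg.continuousOn_derivWithin (uniqueDiffOn_Icc h11) (by norm_num)) hgm hx₀ hgx₀
  have hnonneg : 0 ≤ ∫ x in (-1 : ℝ)..1,
      RCLike.re (conj (g x) * iteratedDerivWithin 2 g (Icc (-1) 1) x) := by
    refine integral_nonneg h11.le fun x hx => ?_
    have hg'' : iteratedDerivWithin 2 g (Icc (-1) 1) x = (β x - w * α x ^ 2) * g x := by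
      linear_combination -hode x hx
    rw [hg'', mul_left_comm, Complex.conj_mul', ← Complex.ofReal_pow, ← Complex.ofReal_pow,
      RCLike.re_to_complex, Complex.re_mul_ofReal]
    simp only [Complex.sub_re, Complex.ofReal_re, Complex.re_mul_ofReal]
    exact mul_nonneg (by nlinarith [hβ0 x hx, sq_nonneg (α x)]) (by positivity)
  linarith [integral_re_conj_mul_iteratedDerivWithin_two h11 hg hgm hgp]

/-- If `g : [-1,1] → ℂ` is a nontrivial twice continuously differentiable
solution of the Dirichlet problem `-g'' - w·α²·g + β·g = 0`, `g(±1) = 0`, where `α, β` are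
continuous real-valued functions on `[-1,1]` with `α` nonvanishing, then
if moreover `β ≥ 0` on `[-1,1]` then `Re w > 0`. -/
theorem stmt2 (α β : ℝ → ℝ)
    (hα : ContinuousOn α (Icc (-1) 1)) (hβ : ContinuousOn β (Icc (-1) 1))
    (hα0 : ∀ x ∈ Icc (-1 : ℝ) 1, α x ≠ 0)
    (w : ℂ) (g : ℝ → ℂ)
    (hg : ContDiffOn ℝ 2 g (Icc (-1) 1))
    (hg0 : ∃ x ∈ Icc (-1 : ℝ) 1, g x ≠ 0)
    (hgm : g (-1) = 0) (hgp : g 1 = 0)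
    (hβ0 : ∀ x ∈ Icc (-1 : ℝ) 1, 0 ≤ β x)
    (hode : ∀ x ∈ Icc (-1 : ℝ) 1,
      -(iteratedDerivWithin 2 g (Icc (-1) 1) x) - w * ((α x : ℂ)) ^ 2 * g x
        + (β x : ℂ) * g x = 0) :
    0 < w.re :=
  stmt2_general α β w g hg hg0 hgm hgp hβ0 hode
end

section
/- The set Σ₀ is infinite. -/
open Set

/-- `Σ₀`: the set of `w ∈ ℂ` for which the Dirichlet problem
`-g'' - w·α²·g + β·g = 0` on `[-1,1]`, `g(±1) = 0`, has a nontrivial twice continuously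
differentiable solution. -/
def Sigma0 (α β : ℝ → ℝ) : Set ℂ :=
  {w : ℂ | ∃ g : ℝ → ℂ,
    ContDiffOn ℝ 2 g (Icc (-1) 1) ∧
    (∃ x ∈ Icc (-1 : ℝ) 1, g x ≠ 0) ∧
    g (-1) = 0 ∧ g 1 = 0 ∧
    ∀ x ∈ Icc (-1 : ℝ) 1,
      -(iteratedDerivWithin 2 g (Icc (-1) 1) x) - w * ((α x : ℂ)) ^ 2 * g x
        + (β x : ℂ) * g x = 0}

/-!
Prüfer transformation. For real `w` put `q_w = w α² - β`. The angle equation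
`θ' = cos² θ + q_w sin² θ`, `θ(-1) = 0`, is globally Lipschitz in `θ`, so `θ_w` exists on
`[-1, 1]`, and every `w` with `θ_w(1) = kπ`, `k ≥ 1`, is an eigenvalue with eigenfunction
`e^ρ sin θ_w`. Gronwall's inequality makes `w ↦ θ_w(1)` continuous. Since `α²` is bounded below by
a positive constant, `q_w ≥ c` on `[-1, 1]` once `w` is large, and comparing `θ_w` with the
constant-coefficient angle through `Ψ_c(y) = ∫₀^y dt / (cos² t + c sin² t)`, which satisfies
`Ψ_c(kπ) = k Ψ_c(π)` and `Ψ_c(π) → 0` as `c → ∞`, shows `θ_w(1) → ∞`. By the intermediate value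
theorem `θ_w(1)` then takes every large value `kπ`, each at a different `w`.
-/

open Real Filter Topology MeasureTheory

lemma ContinuousOn.exists_hasDerivWithinAt_Icc {E : Type*} [NormedAddCommGroup E]
    [NormedSpace ℝ E] [CompleteSpace E] {a b : ℝ} {f : ℝ → E} (hf : ContinuousOn f (Icc a b))
    (hab : a ≤ b) : ∃ F : ℝ → E, ∀ t ∈ Icc a b, HasDerivWithinAt F (f t) (Icc a b) t := by
  set g := IccExtend hab ((Icc a b).domRestrict f)
  have hg : Continuous g := continuous_IccExtend_iff.2 hf.domRestrict
  refine ⟨fun x => ∫ s in a..x, g s, fun t ht => ?_⟩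
  have hgt : g t = f t := IccExtend_of_mem hab _ ht
  exact hgt ▸ (hg.integral_hasStrictDerivAt a t).hasDerivAt.hasDerivWithinAt

lemma lipschitzWith_sin_sq : LipschitzWith 1 fun y : ℝ => sin y ^ 2 := by
  refine lipschitzWith_of_nnnorm_deriv_le (fun y => (differentiableAt_sin.pow 2)) fun y => ?_
  have h : deriv (fun y : ℝ => sin y ^ 2) y = sin (2 * y) := by
    rw [((hasDerivAt_sin y).fun_pow 2).deriv, sin_two_mul]; push_cast; ring
  rw [h, ← NNReal.coe_le_coe, coe_nnnorm, NNReal.coe_one, Real.norm_eq_abs]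
  exact abs_sin_le_one _

namespace Prufer

variable {q : ℝ → ℝ} {a b : ℝ}

/-- The right-hand side of the Prüfer angle equation for `-u'' = q u`, in the coordinates
`u = r sin θ`, `u' = r cos θ`. -/
noncomputable def field (q : ℝ → ℝ) (t y : ℝ) : ℝ := cos y ^ 2 + q t * sin y ^ 2

lemma field_eq_one_add (q : ℝ → ℝ) (t y : ℝ) : field q t y = 1 + (q t - 1) * sin y ^ 2 := by
  rw [field, cos_sq']; ring

lemma lipschitzWith_field (q : ℝ → ℝ) (t : ℝ) : LipschitzWith ‖q t - 1‖₊ (field q t) := by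
  refine LipschitzWith.of_dist_le_mul fun y z => ?_
  have := lipschitzWith_sin_sq.dist_le_mul y z
  simp only [NNReal.coe_one, one_mul] at this
  rw [field_eq_one_add, field_eq_one_add, dist_add_left, dist_eq_norm, ← mul_sub, norm_mul,
    coe_nnnorm, ← dist_eq_norm]
  exact mul_le_mul_of_nonneg_left this dist_nonneg

lemma abs_field_le (q : ℝ → ℝ) (t y : ℝ) : |field q t y| ≤ 1 + |q t - 1| := by
  rw [field_eq_one_add]
  calc |1 + (q t - 1) * sin y ^ 2| ≤ |1| + |q t - 1| * |sin y ^ 2| := by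
        rw [← abs_mul]; exact abs_add_le _ _
    _ ≤ 1 + |q t - 1| * 1 := by
        gcongr
        · simp
        · rw [abs_pow]; exact pow_le_one₀ (abs_nonneg _) (abs_sin_le_one y)
    _ = 1 + |q t - 1| := by ring

def IsAngle (q : ℝ → ℝ) (a b : ℝ) (θ : ℝ → ℝ) : Prop :=
  θ a = 0 ∧ ∀ t ∈ Icc a b, HasDerivWithinAt θ (field q t (θ t)) (Icc a b) t

lemma exists_isAngle (hq : ContinuousOn q (Icc a b)) (hab : a ≤ b) : ∃ θ, IsAngle q a b θ := by
  obtain ⟨Q, hQ⟩ : ∃ Q, ∀ t ∈ Icc a b, |q t - 1| ≤ Q :=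
    isCompact_Icc.exists_bound_of_continuousOn (hq.sub continuousOn_const)
  have hQ0 : 0 ≤ Q := (abs_nonneg _).trans (hQ a (left_mem_Icc.2 hab))
  set L : NNReal := ⟨1 + Q, by positivity⟩
  have hpl : IsPicardLindelof (field q) (tmin := a) (tmax := b) ⟨a, left_mem_Icc.2 hab⟩ 0
      (L * ⟨b - a, sub_nonneg.2 hab⟩) 0 L Q.toNNReal := by
    refine ⟨fun t ht => ?_, fun y _ => ?_, fun t ht y _ => ?_, ?_⟩
    · refine ((lipschitzWith_field q t).weaken ?_).lipschitzOnWith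
      rw [← NNReal.coe_le_coe, coe_nnnorm, Real.coe_toNNReal _ hQ0, Real.norm_eq_abs]
      exact hQ t ht
    · simp only [field]
      exact continuousOn_const.add (hq.mul continuousOn_const)
    · exact (abs_field_le q t y).trans (add_le_add_right (hQ t ht) 1)
    · simp [L, hab]
      exact le_rfl
  exact hpl.exists_eq_forall_mem_Icc_hasDerivWithinAt₀

lemma IsAngle.continuousOn {θ : ℝ → ℝ} (h : IsAngle q a b θ) : ContinuousOn θ (Icc a b) :=
  fun t ht => (h.2 t ht).continuousWithinAt

lemma IsAngle.hasDerivWithinAt_Ici {θ : ℝ → ℝ} (h : IsAngle q a b θ) {t : ℝ} (ht : t ∈ Ico a b) :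
    HasDerivWithinAt θ (field q t (θ t)) (Ici t) t :=
  (h.2 t (Ico_subset_Icc_self ht)).mono_of_mem_nhdsWithin (Icc_mem_nhdsGE_of_mem ht)

lemma dist_le_gronwallBound {q₁ q₂ θ₁ θ₂ : ℝ → ℝ} {K : NNReal} {ε : ℝ}
    (hK : ∀ t ∈ Icc a b, |q₁ t - 1| ≤ K) (hε : ∀ t ∈ Icc a b, |q₂ t - q₁ t| ≤ ε)
    (h₁ : IsAngle q₁ a b θ₁) (h₂ : IsAngle q₂ a b θ₂) (hab : a ≤ b) :
    dist (θ₁ b) (θ₂ b) ≤ gronwallBound 0 K ε (b - a) := by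
  have hlip : ∀ t ∈ Ico a b, LipschitzOnWith K (field q₁ t) univ := fun t ht =>
    ((lipschitzWith_field q₁ t).weaken (by
      rw [← NNReal.coe_le_coe, coe_nnnorm, Real.norm_eq_abs]
      exact hK t (Ico_subset_Icc_self ht))).lipschitzOnWith
  have hfield : ∀ t ∈ Ico a b, dist (field q₂ t (θ₂ t)) (field q₁ t (θ₂ t)) ≤ ε := by
    intro t ht
    rw [Real.dist_eq, field, field, add_sub_add_left_eq_sub, ← sub_mul, abs_mul, abs_pow]
    calc |q₂ t - q₁ t| * |sin (θ₂ t)| ^ 2 ≤ ε * 1 := by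
          gcongr
          · exact (abs_nonneg _).trans (hε t (Ico_subset_Icc_self ht))
          · exact hε t (Ico_subset_Icc_self ht)
          · exact pow_le_one₀ (abs_nonneg _) (abs_sin_le_one _)
      _ = ε := mul_one ε
  simpa using dist_le_of_approx_trajectories_ODE_of_mem (εf := 0) (δ := 0) hlip h₁.continuousOn
    (fun t ht => h₁.hasDerivWithinAt_Ici ht) (fun t _ => by simp) (fun _ _ => trivial)
    h₂.continuousOn (fun t ht => h₂.hasDerivWithinAt_Ici ht) hfield (fun _ _ => trivial)
    (le_of_eq (by simp [h₁.1, h₂.1])) b (right_mem_Icc.2 hab)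

lemma continuous_endpoint {p r : ℝ → ℝ} (hp : ContinuousOn p (Icc a b))
    (hr : ContinuousOn r (Icc a b)) {θ : ℝ → ℝ → ℝ}
    (hθ : ∀ w, IsAngle (fun t => w * p t - r t) a b (θ w)) (hab : a ≤ b) :
    Continuous fun w => θ w b := by
  rw [continuous_iff_continuousAt]
  intro w₀
  obtain ⟨P, hP⟩ := isCompact_Icc.exists_bound_of_continuousOn hp
  obtain ⟨K, hK⟩ : ∃ K, ∀ t ∈ Icc a b, |w₀ * p t - r t - 1| ≤ K :=
    isCompact_Icc.exists_bound_of_continuousOn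
      ((continuousOn_const.mul hp).sub hr |>.sub continuousOn_const)
  have hdist : ∀ w, dist (θ w₀ b) (θ w b) ≤
      gronwallBound 0 K.toNNReal (|w - w₀| * P) (b - a) := fun w =>
    dist_le_gronwallBound (fun t ht => (hK t ht).trans (Real.le_coe_toNNReal K))
      (fun t ht => by
        rw [show w * p t - r t - (w₀ * p t - r t) = (w - w₀) * p t by ring, abs_mul]
        exact mul_le_mul_of_nonneg_left (hP t ht) (abs_nonneg _))
      (hθ w₀) (hθ w) hab
  have hlim : Tendsto (fun w => gronwallBound 0 K.toNNReal (|w - w₀| * P) (b - a))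
      (𝓝 w₀) (𝓝 0) := by
    have hε : Tendsto (fun w => |w - w₀| * P) (𝓝 w₀) (𝓝 0) :=
      ((continuous_id.sub continuous_const).abs.mul continuous_const).tendsto' w₀ _ (by simp)
    simpa only [gronwallBound_ε0_δ0, Function.comp_def] using
      ((gronwallBound_continuous_ε 0 K.toNNReal (b - a)).tendsto 0).comp hε
  exact tendsto_iff_dist_tendsto_zero.2 <|
    squeeze_zero (fun _ => dist_nonneg) (fun w => (dist_comm _ _).trans_le (hdist w)) hlim

section Psi

variable {c : ℝ}

lemma cos_sq_add_mul_sin_sq_pos (hc : 0 < c) (t : ℝ) : 0 < cos t ^ 2 + c * sin t ^ 2 := by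
  rcases eq_or_ne (sin t) 0 with h | h
  · simp [h, cos_sq']
  · exact add_pos_of_nonneg_of_pos (sq_nonneg _) (mul_pos hc (by positivity))

lemma continuous_inv_cos_sq_add_mul_sin_sq (hc : 0 < c) :
    Continuous fun t => (cos t ^ 2 + c * sin t ^ 2)⁻¹ :=
  (by fun_prop : Continuous fun t => cos t ^ 2 + c * sin t ^ 2).inv₀
    fun t => (cos_sq_add_mul_sin_sq_pos hc t).ne'

/-- For `c > 0`, `Psi c` is the time the Prüfer angle of `-u'' = c u` takes to go from `0`
to `y`. -/
noncomputable def Psi (c y : ℝ) : ℝ := ∫ t in (0 : ℝ)..y, (cos t ^ 2 + c * sin t ^ 2)⁻¹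

lemma hasDerivAt_Psi (hc : 0 < c) (y : ℝ) :
    HasDerivAt (Psi c) (cos y ^ 2 + c * sin y ^ 2)⁻¹ y :=
  ((continuous_inv_cos_sq_add_mul_sin_sq hc).integral_hasStrictDerivAt 0 y).hasDerivAt

lemma continuous_Psi (hc : 0 < c) : Continuous (Psi c) :=
  continuous_iff_continuousAt.2 fun y => (hasDerivAt_Psi hc y).continuousAt

lemma Psi_strictMono (hc : 0 < c) : StrictMono (Psi c) :=
  strictMono_of_hasDerivAt_pos (hasDerivAt_Psi hc) fun y =>
    inv_pos.2 (cos_sq_add_mul_sin_sq_pos hc y)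

lemma Psi_nat_mul_pi (hc : 0 < c) (N : ℕ) : Psi c (N * π) = N * Psi c π := by
  have hper : Function.Periodic (fun t => (cos t ^ 2 + c * sin t ^ 2)⁻¹) π := fun t => by
    simp [cos_add_pi, sin_add_pi]
  simpa [Psi, zsmul_eq_mul] using hper.intervalIntegral_add_zsmul_eq N 0
    fun t₁ t₂ => (continuous_inv_cos_sq_add_mul_sin_sq hc).intervalIntegrable t₁ t₂

/-- Dominated convergence: the integrand is bounded by `1` once `c ≥ 1` and tends to `0` away
from the zeros of `sin`. -/
lemma tendsto_Psi_pi : Tendsto (fun c => Psi c π) atTop (𝓝 0) := by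
  have hlim : ∀ t ∈ Ioo 0 π,
      Tendsto (fun c : ℝ => (cos t ^ 2 + c * sin t ^ 2)⁻¹) atTop (𝓝 0) := fun t ht =>
    (tendsto_atTop_add_const_left _ _ (tendsto_id.atTop_mul_const
      (pow_pos (sin_pos_of_pos_of_lt_pi ht.1 ht.2) 2))).inv_tendsto_atTop
  have h := intervalIntegral.tendsto_integral_filter_of_dominated_convergence (μ := volume)
    (a := 0) (b := π) (F := fun c t => (cos t ^ 2 + c * sin t ^ 2)⁻¹) (f := fun _ => 0) (fun _ => 1)
    ((eventually_gt_atTop 0).mono fun c hc =>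
      (continuous_inv_cos_sq_add_mul_sin_sq hc).aestronglyMeasurable)
    ((eventually_ge_atTop 1).mono fun c hc => ae_of_all _ fun t _ => by
      have h1 : 1 ≤ cos t ^ 2 + c * sin t ^ 2 := by
        nlinarith [sin_sq_add_cos_sq t, sq_nonneg (sin t)]
      rw [Real.norm_eq_abs, abs_inv, abs_of_pos (by linarith)]
      exact inv_le_one_of_one_le₀ h1)
    intervalIntegrable_const
    ((measure_eq_zero_iff_ae_notMem.1 (measure_singleton π)).mono fun t ht htI => by
      rw [uIoc_of_le pi_pos.le] at htI
      exact hlim t ⟨htI.1, lt_of_le_of_ne htI.2 ht⟩)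
  simpa [Psi] using h

end Psi

/-- Along a Prüfer angle with `q ≥ c`, `Psi c ∘ θ` grows at least at unit speed. -/
lemma IsAngle.sub_le_Psi {θ : ℝ → ℝ} {c : ℝ} (hθ : IsAngle q a b θ) (hc : 0 < c)
    (hq : ∀ t ∈ Icc a b, c ≤ q t) (hab : a ≤ b) : b - a ≤ Psi c (θ b) := by
  have hmono : MonotoneOn (fun x => Psi c (θ x) - x) (Icc a b) := by
    refine monotoneOn_of_hasDerivWithinAt_nonneg (convex_Icc a b)
      (f' := fun x => (cos (θ x) ^ 2 + c * sin (θ x) ^ 2)⁻¹ * field q x (θ x) - 1)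
      ((continuous_Psi hc).comp_continuousOn hθ.continuousOn |>.sub continuousOn_id)
      (fun x hx => ?_) (fun x hx => ?_)
    · exact ((hasDerivAt_Psi hc (θ x)).comp_hasDerivWithinAt x
        ((hθ.2 x (interior_subset hx)).mono interior_subset)).sub (hasDerivWithinAt_id x _)
    · have hqx := hq x (interior_subset hx)
      rw [sub_nonneg, le_inv_mul_iff₀ (cos_sq_add_mul_sin_sq_pos hc _), mul_one, field]
      gcongr
  simpa [hθ.1, Psi] using hmono (left_mem_Icc.2 hab) (right_mem_Icc.2 hab) hab

lemma exists_forall_nat_mul_pi_lt (N : ℕ) (hab : a < b) :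
    ∃ c, ∀ q θ : ℝ → ℝ, (∀ t ∈ Icc a b, c ≤ q t) → IsAngle q a b θ → N * π < θ b := by
  have hsmall : ∀ᶠ c in atTop, N * Psi c π < b - a := by
    have := (tendsto_Psi_pi.const_mul (N : ℝ)).eventually (gt_mem_nhds (a := b - a) ?_)
    · simpa using this
    · simpa using hab
  obtain ⟨c, hc, hNc⟩ := ((eventually_gt_atTop 0).and hsmall).exists
  refine ⟨c, fun q θ hq hθ => (Psi_strictMono hc).lt_iff_lt.1 ?_⟩
  calc Psi c (N * π) = N * Psi c π := Psi_nat_mul_pi hc N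
    _ < b - a := hNc
    _ ≤ Psi c (θ b) := hθ.sub_le_Psi hc hq hab.le

lemma tendsto_endpoint_atTop {p r : ℝ → ℝ} {m R : ℝ} (hm : 0 < m)
    (hp : ∀ t ∈ Icc a b, m ≤ p t) (hr : ∀ t ∈ Icc a b, r t ≤ R) {θ : ℝ → ℝ → ℝ}
    (hθ : ∀ w, IsAngle (fun t => w * p t - r t) a b (θ w)) (hab : a < b) :
    Tendsto (fun w => θ w b) atTop atTop := by
  refine tendsto_atTop.2 fun y => ?_
  obtain ⟨N, hN⟩ := exists_nat_ge (y / π)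
  obtain ⟨c, hc⟩ := exists_forall_nat_mul_pi_lt N hab
  filter_upwards [eventually_ge_atTop 0, eventually_ge_atTop ((c + R) / m)] with w hw0 hw
  refine ((div_le_iff₀ pi_pos).1 hN).trans (hc _ _ (fun t ht => ?_) (hθ w)).le
  have := (div_le_iff₀ hm).1 hw
  nlinarith [hp t ht, hr t ht]

/- Undoing the Prüfer substitution: `u = e^ρ sin θ`, `u' = e^ρ cos θ`, where
`ρ' = (1 - q) sin θ cos θ` is the logarithmic derivative of the amplitude. -/
section

variable {θ ρ : ℝ → ℝ} {s : Set ℝ} {t : ℝ}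

lemma hasDerivWithinAt_exp_mul_sin (hθ : HasDerivWithinAt θ (field q t (θ t)) s t)
    (hρ : HasDerivWithinAt ρ ((1 - q t) * (sin (θ t) * cos (θ t))) s t) :
    HasDerivWithinAt (fun x => exp (ρ x) * sin (θ x)) (exp (ρ t) * cos (θ t)) s t := by
  refine (hρ.exp.mul (hθ.sin)).congr_deriv ?_
  simp only [field]
  linear_combination (exp (ρ t) * cos (θ t)) * sin_sq_add_cos_sq (θ t)

lemma hasDerivWithinAt_exp_mul_cos (hθ : HasDerivWithinAt θ (field q t (θ t)) s t)
    (hρ : HasDerivWithinAt ρ ((1 - q t) * (sin (θ t) * cos (θ t))) s t) :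
    HasDerivWithinAt (fun x => exp (ρ x) * cos (θ x)) (-q t * (exp (ρ t) * sin (θ t))) s t := by
  refine (hρ.exp.mul (hθ.cos)).congr_deriv ?_
  simp only [field]
  linear_combination (-(q t * exp (ρ t) * sin (θ t))) * sin_sq_add_cos_sq (θ t)

end

lemma IsAngle.exists_eigenfunction {θ : ℝ → ℝ} (hθ : IsAngle q a b θ)
    (hq : ContinuousOn q (Icc a b)) (hab : a ≤ b) {k : ℕ} (hk : k ≠ 0) (hθb : θ b = k * π) :
    ∃ u u' : ℝ → ℝ, (∀ t ∈ Icc a b, HasDerivWithinAt u (u' t) (Icc a b) t) ∧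
      (∀ t ∈ Icc a b, HasDerivWithinAt u' (-q t * u t) (Icc a b) t) ∧
      u a = 0 ∧ u b = 0 ∧ ∃ t ∈ Icc a b, u t ≠ 0 := by
  obtain ⟨ρ, hρ⟩ := ContinuousOn.exists_hasDerivWithinAt_Icc
    ((continuousOn_const.sub hq).mul
      ((continuous_sin.comp_continuousOn hθ.continuousOn).mul
        (continuous_cos.comp_continuousOn hθ.continuousOn))) hab
  refine ⟨fun x => exp (ρ x) * sin (θ x), fun x => exp (ρ x) * cos (θ x),
    fun t ht => hasDerivWithinAt_exp_mul_sin (hθ.2 t ht) (hρ t ht),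
    fun t ht => hasDerivWithinAt_exp_mul_cos (hθ.2 t ht) (hρ t ht),
    by simp [hθ.1], by simp [hθb, sin_nat_mul_pi], ?_⟩
  have hπ : π / 2 ∈ Icc (θ a) (θ b) := by
    rw [hθ.1, hθb]
    refine ⟨by positivity, ?_⟩
    have : (1 : ℝ) ≤ k := by exact_mod_cast Nat.one_le_iff_ne_zero.2 hk
    nlinarith [pi_pos]
  obtain ⟨t, ht, hθt⟩ := intermediate_value_Icc hab hθ.continuousOn hπ
  exact ⟨t, ht, by simp [hθt, (exp_pos _).ne']⟩

end Prufer

section SecondDerivative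

variable {E : Type*} [NormedAddCommGroup E] [NormedSpace ℝ E] {f f' f'' : ℝ → E} {s : Set ℝ}

lemma iteratedDerivWithin_two_eq_of_hasDerivWithinAt (hs : UniqueDiffOn ℝ s)
    (hf : ∀ x ∈ s, HasDerivWithinAt f (f' x) s x) (hf' : ∀ x ∈ s, HasDerivWithinAt f' (f'' x) s x)
    {x : ℝ} (hx : x ∈ s) : iteratedDerivWithin 2 f s x = f'' x := by
  have h1 : EqOn (iteratedDerivWithin 1 f s) f' s := fun y hy => by
    rw [iteratedDerivWithin_one, (hf y hy).derivWithin (hs y hy)]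
  rw [iteratedDerivWithin_succ, derivWithin_congr h1 (h1 hx), (hf' x hx).derivWithin (hs x hx)]

lemma contDiffOn_two_of_hasDerivWithinAt (hs : UniqueDiffOn ℝ s)
    (hf : ∀ x ∈ s, HasDerivWithinAt f (f' x) s x) (hf' : ∀ x ∈ s, HasDerivWithinAt f' (f'' x) s x)
    (hf'' : ContinuousOn f'' s) : ContDiffOn ℝ 2 f s := by
  have hderiv {g g' : ℝ → E} (hg : ∀ x ∈ s, HasDerivWithinAt g (g' x) s x) :
      EqOn (derivWithin g s) g' s := fun x hx => (hg x hx).derivWithin (hs x hx)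
  rw [show (2 : WithTop ℕ∞) = 1 + 1 from rfl, contDiffOn_succ_iff_derivWithin hs]
  refine ⟨fun x hx => (hf x hx).differentiableWithinAt, by simp, ?_⟩
  refine ContDiffOn.congr ?_ (hderiv hf)
  rw [show (1 : WithTop ℕ∞) = 0 + 1 from rfl, contDiffOn_succ_iff_derivWithin hs]
  exact ⟨fun x hx => (hf' x hx).differentiableWithinAt, by simp,
    contDiffOn_zero.2 (hf''.congr (hderiv hf'))⟩

end SecondDerivative

lemma ofReal_mem_Sigma0 {α β : ℝ → ℝ} (hα : ContinuousOn α (Icc (-1) 1))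
    (hβ : ContinuousOn β (Icc (-1) 1)) {w : ℝ} {u u' : ℝ → ℝ}
    (hu : ∀ t ∈ Icc (-1 : ℝ) 1, HasDerivWithinAt u (u' t) (Icc (-1) 1) t)
    (hu' : ∀ t ∈ Icc (-1 : ℝ) 1, HasDerivWithinAt u' (-(w * α t ^ 2 - β t) * u t) (Icc (-1) 1) t)
    (hu_neg : u (-1) = 0) (hu_pos : u 1 = 0) (hne : ∃ t ∈ Icc (-1 : ℝ) 1, u t ≠ 0) :
    (w : ℂ) ∈ Sigma0 α β := by
  have hs : UniqueDiffOn ℝ (Icc (-1 : ℝ) 1) := uniqueDiffOn_Icc (by norm_num)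
  have hg : ∀ t ∈ Icc (-1 : ℝ) 1, HasDerivWithinAt (fun x => (u x : ℂ)) (u' t) (Icc (-1) 1) t :=
    fun t ht => (hu t ht).ofReal_comp
  have hg' : ∀ t ∈ Icc (-1 : ℝ) 1, HasDerivWithinAt (fun x => (u' x : ℂ))
      ((-(w * α t ^ 2 - β t) * u t : ℝ) : ℂ) (Icc (-1) 1) t :=
    fun t ht => (hu' t ht).ofReal_comp
  have hu_cont : ContinuousOn u (Icc (-1) 1) := fun t ht => (hu t ht).continuousWithinAt
  refine ⟨fun x => (u x : ℂ), contDiffOn_two_of_hasDerivWithinAt hs hg hg' ?_,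
    by simpa using hne, by simp [hu_neg], by simp [hu_pos], fun t ht => ?_⟩
  · exact Complex.continuous_ofReal.comp_continuousOn
      (((continuousOn_const.mul (hα.pow 2)).sub hβ).neg.mul hu_cont)
  · rw [iteratedDerivWithin_two_eq_of_hasDerivWithinAt hs hg hg' ht]
    push_cast
    ring

lemma Continuous.infinite_preimage_of_not_bddAbove {f : ℝ → ℝ} (hf : Continuous f)
    (htop : Tendsto f atTop atTop) {T : Set ℝ} (hT : ¬BddAbove T) : (f ⁻¹' T).Infinite := by
  intro hfin
  obtain ⟨M, hM⟩ := (hfin.image f).bddAbove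
  refine hT ⟨max M (f 0), fun y hy => le_of_not_gt fun hlt => ?_⟩
  obtain ⟨x, -, rfl⟩ := intermediate_value_Ici hf.continuousOn htop
    (le_of_lt (max_lt_iff.1 hlt).2 : f 0 ≤ y)
  exact (max_lt_iff.1 hlt).1.not_ge (hM ⟨x, hy, rfl⟩)

/-- for continuous `α, β : [-1,1] → ℝ` with `α` nonvanishing, the set `Σ₀`
is infinite. -/
theorem stmt3 (α β : ℝ → ℝ)
    (hα : ContinuousOn α (Icc (-1) 1)) (hβ : ContinuousOn β (Icc (-1) 1))
    (hα0 : ∀ x ∈ Icc (-1 : ℝ) 1, α x ≠ 0) :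
    (Sigma0 α β).Infinite := by
  have hI : (-1 : ℝ) < 1 := by norm_num
  obtain ⟨t₀, ht₀, hmin⟩ := isCompact_Icc.exists_isMinOn (nonempty_Icc.2 hI.le) (hα.pow 2)
  have hm : 0 < α t₀ ^ 2 := by have := hα0 t₀ ht₀; positivity
  obtain ⟨R, hR⟩ := isCompact_Icc.bddAbove_image hβ
  have hq (w : ℝ) : ContinuousOn (fun t => w * α t ^ 2 - β t) (Icc (-1) 1) :=
    (continuousOn_const.mul (hα.pow 2)).sub hβ
  choose θ hθ using fun w => Prufer.exists_isAngle (hq w) hI.le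
  have hcont := Prufer.continuous_endpoint (hα.pow 2) hβ hθ hI.le
  have htop := Prufer.tendsto_endpoint_atTop hm (fun t ht => hmin ht)
    (fun t ht => hR (mem_image_of_mem β ht)) hθ hI
  have hT : ¬BddAbove (range fun k : ℕ => (k + 1) * π) := by
    refine not_bddAbove_iff.2 fun x => ?_
    obtain ⟨k, hk⟩ := exists_nat_gt (x / π)
    exact ⟨_, ⟨k, rfl⟩, by nlinarith [(div_lt_iff₀ pi_pos).1 hk, pi_pos]⟩
  refine ((hcont.infinite_preimage_of_not_bddAbove htop hT).image
    Complex.ofReal_injective.injOn).mono ?_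
  rintro _ ⟨w, ⟨k, hk⟩, rfl⟩
  obtain ⟨u, u', hu, hu', hu_neg, hu_pos, hne⟩ :=
    (hθ w).exists_eigenfunction (hq w) hI.le k.succ_ne_zero (by push_cast; exact hk.symm)
  exact ofReal_mem_Sigma0 hα hβ hu hu' hu_neg hu_pos hne
end

section
/- The set Σ₀ is discrete in ℂ: no point of ℂ is an accumulation point of Σ₀; equivalently, every w ∈ ℂ has an open neighborhood containing at most one point of Σ₀. -/
/-!
Every point of `Σ₀` is real: pairing an eigenfunction `g` with its conjugate in the Wronskian
identity gives `(conj w - w) ∫ α² |g|² = 0`. For a real eigenvalue `v`, a real eigenfunction can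
be normalised by `h(-1) = 0`, `h'(-1) = 1`. By Grönwall's inequality these normalised
eigenfunctions are uniformly bounded for `v` in a bounded set and depend Lipschitz-continuously
on `v`, while `∫ α² h²` is bounded below because `h` grows linearly near `-1`. Eigenfunctions of
distinct eigenvalues are `α²`-orthogonal, so `∫ α² h₁² = ∫ α² h₁ (h₁ - h₂) = O(|v₁ - v₂|)`:
distinct eigenvalues near a given point cannot be too close.
-/

open Set

open MeasureTheory intervalIntegral

variable {a b : ℝ}

theorem integral_eq_sub_of_hasDerivWithinAt_Icc {E : Type*} [NormedAddCommGroup E]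
    [NormedSpace ℝ E] [CompleteSpace E] {f f' : ℝ → E} (hab : a ≤ b)
    (hf : ∀ x ∈ Icc a b, HasDerivWithinAt f (f' x) (Icc a b) x)
    (hf' : ContinuousOn f' (Icc a b)) :
    ∫ x in a..b, f' x = f b - f a :=
  integral_eq_sub_of_hasDerivAt_of_le hab
    (fun x hx => (hf x hx).continuousWithinAt)
    (fun x hx => (hf x (Ioo_subset_Icc_self hx)).hasDerivAt (Icc_mem_nhds hx.1 hx.2))
    (hf'.intervalIntegrable_of_Icc hab)

theorem gronwallBound_le_mul_exp {δ K ε t T : ℝ} (hδ : 0 ≤ δ) (hK : 1 ≤ K) (hε : 0 ≤ ε)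
    (ht : 0 ≤ t) (htT : t ≤ T) : gronwallBound δ K ε t ≤ (δ + ε) * Real.exp (K * T) := by
  have hK0 : 0 < K := by linarith
  rw [gronwallBound_of_K_ne_0 hK0.ne']
  have hexp : Real.exp (K * t) ≤ Real.exp (K * T) := Real.exp_le_exp.2 (by nlinarith)
  have hεK : ε / K ≤ ε := div_le_self hε hK
  have : ε / K * (Real.exp (K * t) - 1) ≤ ε * Real.exp (K * T) := by
    gcongr
    · linarith [Real.one_le_exp (by positivity : 0 ≤ K * t)]
    · linarith
  nlinarith

/-- Grönwall's inequality applied to the pair `(h, h')`, with the sup norm on `ℝ × ℝ`. -/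
theorem abs_le_of_hasDerivWithinAt_deriv_eq {p e h h' : ℝ → ℝ} {K ε δ : ℝ} (hK : 1 ≤ K)
    (hp : ∀ x ∈ Icc a b, |p x| ≤ K) (he : ∀ x ∈ Icc a b, |e x| ≤ ε)
    (hh : ∀ x ∈ Icc a b, HasDerivWithinAt h (h' x) (Icc a b) x)
    (hh' : ∀ x ∈ Icc a b, HasDerivWithinAt h' (p x * h x + e x) (Icc a b) x)
    (ha : |h a| ≤ δ) (ha' : |h' a| ≤ δ) :
    ∀ x ∈ Icc a b, |h x| ≤ (δ + ε) * Real.exp (K * (b - a)) := by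
  have hderiv : ∀ x ∈ Icc a b, HasDerivWithinAt (fun y => (h y, h' y))
      (h' x, p x * h x + e x) (Icc a b) x := fun x hx => (hh x hx).prodMk (hh' x hx)
  have hgron := norm_le_gronwallBound_of_norm_deriv_right_le (δ := δ) (K := K) (ε := ε)
    (fun x hx => (hderiv x hx).continuousWithinAt)
    (fun x hx => (hderiv x (Ico_subset_Icc_self hx)).mono_of_mem_nhdsWithin
      (Icc_mem_nhdsGE_of_mem ⟨hx.1, hx.2⟩))
    (by simpa [Prod.norm_def] using And.intro ha ha') ?_
  · intro x hx
    have hε : 0 ≤ ε := (abs_nonneg _).trans (he x hx)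
    have hδ : 0 ≤ δ := (abs_nonneg _).trans ha
    calc |h x| ≤ ‖(h x, h' x)‖ := by simp [Prod.norm_def]
      _ ≤ gronwallBound δ K ε (x - a) := hgron x hx
      _ ≤ (δ + ε) * Real.exp (K * (b - a)) :=
        gronwallBound_le_mul_exp hδ hK hε (by linarith [hx.1]) (by linarith [hx.2])
  · intro x hx
    have hx' := Ico_subset_Icc_self hx
    simp only [Prod.norm_def, Real.norm_eq_abs]
    have hm : 0 ≤ max |h x| |h' x| := (abs_nonneg _).trans (le_max_left _ _)
    have hε : 0 ≤ ε := (abs_nonneg _).trans (he x hx')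
    have hKm : max |h x| |h' x| ≤ K * max |h x| |h' x| := le_mul_of_one_le_left hm hK
    refine max_le (by linarith [le_max_right |h x| |h' x|]) ?_
    calc |p x * h x + e x| ≤ |p x| * |h x| + |e x| := by rw [← abs_mul]; exact abs_add_le _ _
      _ ≤ K * max |h x| |h' x| + ε := by
        gcongr
        · exact hp x hx'
        · exact le_max_left _ _
        · exact he x hx'

structure IsSolution {𝕜 : Type*} [RCLike 𝕜] (q h h' : ℝ → 𝕜) (s : Set ℝ) : Prop where
  hasDerivWithinAt : ∀ x ∈ s, HasDerivWithinAt h (h' x) s x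
  hasDerivWithinAt_deriv : ∀ x ∈ s, HasDerivWithinAt h' (q x * h x) s x

namespace IsSolution

section RCLike

variable {𝕜 : Type*} [RCLike 𝕜] {q h h' : ℝ → 𝕜} {s : Set ℝ}

theorem continuousOn (hh : IsSolution q h h' s) : ContinuousOn h s :=
  fun x hx => (hh.hasDerivWithinAt x hx).continuousWithinAt

theorem mono {t : Set ℝ} (hh : IsSolution q h h' s) (hts : t ⊆ s) : IsSolution q h h' t where
  hasDerivWithinAt x hx := (hh.hasDerivWithinAt x (hts hx)).mono hts
  hasDerivWithinAt_deriv x hx := (hh.hasDerivWithinAt_deriv x (hts hx)).mono hts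

theorem const_mul (hh : IsSolution q h h' s) (c : 𝕜) :
    IsSolution q (fun x => c * h x) (fun x => c * h' x) s where
  hasDerivWithinAt x hx := (hh.hasDerivWithinAt x hx).const_mul c
  hasDerivWithinAt_deriv x hx := by
    simpa only [mul_left_comm] using (hh.hasDerivWithinAt_deriv x hx).const_mul c

theorem star (hh : IsSolution q h h' s) :
    IsSolution (fun x => star (q x)) (fun x => star (h x)) (fun x => star (h' x)) s where
  hasDerivWithinAt x hx := (hh.hasDerivWithinAt x hx).star
  hasDerivWithinAt_deriv x hx := by
    simpa only [star_mul, mul_comm] using (hh.hasDerivWithinAt_deriv x hx).star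

theorem of_contDiffOn {g : ℝ → 𝕜} (hab : a < b)
    (hg : ContDiffOn ℝ 2 g (Icc a b))
    (heq : ∀ x ∈ Icc a b, iteratedDerivWithin 2 g (Icc a b) x = q x * g x) :
    IsSolution q g (derivWithin g (Icc a b)) (Icc a b) where
  hasDerivWithinAt x hx := (hg.differentiableOn (by norm_num) x hx).hasDerivWithinAt
  hasDerivWithinAt_deriv x hx := by
    rw [← heq x hx, iteratedDerivWithin_eq_iterate]
    exact ((hg.derivWithin (uniqueDiffOn_Icc hab) (m := 1) (by norm_num)).differentiableOn
      one_ne_zero x hx).hasDerivWithinAt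

end RCLike

theorem comp_clm {p : ℝ → ℝ} {g g' : ℝ → ℂ} {s : Set ℝ}
    (hg : IsSolution (fun x => (p x : ℂ)) g g' s) (L : ℂ →L[ℝ] ℝ) :
    IsSolution p (fun x => L (g x)) (fun x => L (g' x)) s where
  hasDerivWithinAt x hx := L.hasFDerivAt.comp_hasDerivWithinAt x (hg.hasDerivWithinAt x hx)
  hasDerivWithinAt_deriv x hx := by
    simpa [Function.comp_def, ← Complex.real_smul] using
      L.hasFDerivAt.comp_hasDerivWithinAt x (hg.hasDerivWithinAt_deriv x hx)

variable {p h h' : ℝ → ℝ} {K δ : ℝ}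

theorem abs_le (hh : IsSolution p h h' (Icc a b)) (hK : 1 ≤ K) (hp : ∀ x ∈ Icc a b, |p x| ≤ K)
    (ha : |h a| ≤ δ) (ha' : |h' a| ≤ δ) :
    ∀ x ∈ Icc a b, |h x| ≤ δ * Real.exp (K * (b - a)) := by
  simpa using abs_le_of_hasDerivWithinAt_deriv_eq (e := 0) (ε := 0) hK hp (by simp)
    hh.hasDerivWithinAt (by simpa using hh.hasDerivWithinAt_deriv) ha ha'

theorem eq_zero_of_eq_zero_of_deriv_eq_zero (hh : IsSolution p h h' (Icc a b))
    (hp : ContinuousOn p (Icc a b)) (ha : h a = 0) (ha' : h' a = 0) :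
    ∀ x ∈ Icc a b, h x = 0 := by
  obtain ⟨K, hK⟩ := isCompact_Icc.exists_bound_of_continuousOn hp
  intro x hx
  simpa using hh.abs_le (δ := 0) (le_max_right K 1) (fun y hy => (hK y hy).trans (le_max_left _ _))
    (by simp [ha]) (by simp [ha']) x hx

theorem abs_sub_le {p₂ h₂ h₂' : ℝ → ℝ} {η M : ℝ} (hh : IsSolution p h h' (Icc a b))
    (hh₂ : IsSolution p₂ h₂ h₂' (Icc a b)) (hK : 1 ≤ K) (hp : ∀ x ∈ Icc a b, |p x| ≤ K)
    (hpp₂ : ∀ x ∈ Icc a b, |p x - p₂ x| ≤ η) (hM : ∀ x ∈ Icc a b, |h₂ x| ≤ M)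
    (ha : h a = h₂ a) (ha' : h' a = h₂' a) :
    ∀ x ∈ Icc a b, |h x - h₂ x| ≤ η * M * Real.exp (K * (b - a)) := by
  have he : ∀ x ∈ Icc a b, |(p x - p₂ x) * h₂ x| ≤ η * M := fun x hx => by
    rw [abs_mul]
    exact mul_le_mul (hpp₂ x hx) (hM x hx) (abs_nonneg _) ((abs_nonneg _).trans (hpp₂ x hx))
  simpa using abs_le_of_hasDerivWithinAt_deriv_eq (h := fun y => h y - h₂ y)
    (h' := fun y => h' y - h₂' y) (δ := 0) hK hp he
    (fun x hx => (hh.hasDerivWithinAt x hx).sub (hh₂.hasDerivWithinAt x hx))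
    (fun x hx => ((hh.hasDerivWithinAt_deriv x hx).sub
      (hh₂.hasDerivWithinAt_deriv x hx)).congr_deriv (by ring))
    (by simp [ha]) (by simp [ha'])

end IsSolution

section LowerBound

variable {c L : ℝ} {h h' h'' : ℝ → ℝ}

theorem half_sub_le_of_abs_deriv_deriv_le
    (hh : ∀ x ∈ Icc a c, HasDerivWithinAt h (h' x) (Icc a c) x)
    (hh' : ∀ x ∈ Icc a c, HasDerivWithinAt h' (h'' x) (Icc a c) x)
    (hL : ∀ x ∈ Icc a c, |h'' x| ≤ L) (hLc : L * (c - a) ≤ 1 / 2) (ha : h a = 0) (ha' : h' a = 1) :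
    ∀ x ∈ Icc a c, (x - a) / 2 ≤ h x := by
  have hslope : ∀ x ∈ Icc a c, |h' x - 1| ≤ L * (x - a) := by
    simpa [ha'] using norm_image_sub_le_of_norm_deriv_le_segment' hh'
      (fun x hx => hL x (Ico_subset_Icc_self hx))
  have hnear : ∀ x ∈ Icc a c, ‖h' x - 1‖ ≤ 1 / 2 := fun x hx => by
    have hL0 : 0 ≤ L := (abs_nonneg _).trans (hL x hx)
    rw [Real.norm_eq_abs]
    calc |h' x - 1| ≤ L * (x - a) := hslope x hx
      _ ≤ L * (c - a) := by gcongr; exact hx.2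
      _ ≤ 1 / 2 := hLc
  have hlin := norm_image_sub_le_of_norm_deriv_le_segment' (f := fun x => h x - (x - a))
    (fun x hx => (hh x hx).sub ((hasDerivAt_id x).sub_const a).hasDerivWithinAt)
    (fun x hx => hnear x (Ico_subset_Icc_self hx))
  intro x hx
  have := abs_le.1 (by simpa [ha] using hlin x hx)
  linarith [this.1]

theorem div_le_integral_sq_of_abs_deriv_deriv_le (hac : a ≤ c)
    (hh : ∀ x ∈ Icc a c, HasDerivWithinAt h (h' x) (Icc a c) x)
    (hh' : ∀ x ∈ Icc a c, HasDerivWithinAt h' (h'' x) (Icc a c) x)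
    (hL : ∀ x ∈ Icc a c, |h'' x| ≤ L) (hLc : L * (c - a) ≤ 1 / 2) (ha : h a = 0) (ha' : h' a = 1) :
    (c - a) ^ 3 / 12 ≤ ∫ x in a..c, h x ^ 2 := by
  have hcont : ContinuousOn h (Icc a c) := fun x hx => (hh x hx).continuousWithinAt
  calc (c - a) ^ 3 / 12 = ∫ x in a..c, ((x - a) / 2) ^ 2 := by
        rw [intervalIntegral.integral_comp_sub_right (fun x => (x / 2) ^ 2)]
        simp [div_pow, integral_pow]
        ring
    _ ≤ ∫ x in a..c, h x ^ 2 := by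
        refine integral_mono_on hac (Continuous.intervalIntegrable (by fun_prop) _ _)
          ((hcont.pow 2).intervalIntegrable_of_Icc hac) fun x hx => ?_
        have hx₀ : 0 ≤ (x - a) / 2 := by linarith [hx.1]
        exact pow_le_pow_left₀ hx₀
          (half_sub_le_of_abs_deriv_deriv_le hh hh' hL hLc ha ha' x hx) 2

end LowerBound

theorem IsSolution.mul_div_le_integral_mul_sq {p ρ h h' : ℝ → ℝ} {K M m c : ℝ}
    (hh : IsSolution p h h' (Icc a b)) (hac : a ≤ c) (hcb : c ≤ b)
    (hρ : ContinuousOn ρ (Icc a b)) (hm : 0 ≤ m) (hmρ : ∀ x ∈ Icc a b, m ≤ ρ x)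
    (hp : ∀ x ∈ Icc a b, |p x| ≤ K) (hM : ∀ x ∈ Icc a b, |h x| ≤ M)
    (hc : K * M * (c - a) ≤ 1 / 2) (ha : h a = 0) (ha' : h' a = 1) :
    m * ((c - a) ^ 3 / 12) ≤ ∫ x in a..b, ρ x * h x ^ 2 := by
  have hsub : Icc a c ⊆ Icc a b := Icc_subset_Icc_right hcb
  have hhc := hh.mono hsub
  have hL : ∀ x ∈ Icc a c, |p x * h x| ≤ K * M := fun x hx => by
    rw [abs_mul]
    exact mul_le_mul (hp x (hsub hx)) (hM x (hsub hx)) (abs_nonneg _)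
      ((abs_nonneg _).trans (hp x (hsub hx)))
  have hcont : ContinuousOn (fun x => ρ x * h x ^ 2) (Icc a b) := hρ.mul (hh.continuousOn.pow 2)
  have hnonneg : ∀ x ∈ Icc a b, 0 ≤ ρ x * h x ^ 2 := fun x hx =>
    mul_nonneg (hm.trans (hmρ x hx)) (sq_nonneg _)
  calc m * ((c - a) ^ 3 / 12) ≤ m * ∫ x in a..c, h x ^ 2 :=
        mul_le_mul_of_nonneg_left (div_le_integral_sq_of_abs_deriv_deriv_le hac
          hhc.hasDerivWithinAt hhc.hasDerivWithinAt_deriv hL hc ha ha') hm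
    _ = ∫ x in a..c, m * h x ^ 2 := (intervalIntegral.integral_const_mul _ _).symm
    _ ≤ ∫ x in a..c, ρ x * h x ^ 2 :=
        integral_mono_on hac
          (ContinuousOn.intervalIntegrable_of_Icc hac
            (continuousOn_const.mul (hhc.continuousOn.pow 2)))
          ((hcont.mono hsub).intervalIntegrable_of_Icc hac)
          fun x hx => mul_le_mul_of_nonneg_right (hmρ x (hsub hx)) (sq_nonneg _)
    _ ≤ ∫ x in a..b, ρ x * h x ^ 2 :=
        intervalIntegral.integral_mono_interval le_rfl hac hcb
          ((ae_restrict_iff' measurableSet_Ioc).2 (Filter.Eventually.of_forall fun x hx =>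
            hnonneg x (Ioc_subset_Icc_self hx)))
          (hcont.intervalIntegrable_of_Icc (hac.trans hcb))

structure IsDirichletSolution {𝕜 : Type*} [RCLike 𝕜] (q h h' : ℝ → 𝕜) (a b : ℝ) : Prop
    extends IsSolution q h h' (Icc a b) where
  apply_left : h a = 0
  apply_right : h b = 0

namespace IsDirichletSolution

/-- The Wronskian `h₁' h₂ - h₂' h₁` has derivative `(q₁ - q₂) h₁ h₂` and vanishes at both ends. -/
theorem integral_sub_mul_mul_eq_zero {𝕜 : Type*} [RCLike 𝕜] {q₁ q₂ h₁ h₁' h₂ h₂' : ℝ → 𝕜}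
    (hab : a ≤ b) (hh₁ : IsDirichletSolution q₁ h₁ h₁' a b)
    (hh₂ : IsDirichletSolution q₂ h₂ h₂' a b)
    (hq₁ : ContinuousOn q₁ (Icc a b)) (hq₂ : ContinuousOn q₂ (Icc a b)) :
    ∫ x in a..b, (q₁ x - q₂ x) * (h₁ x * h₂ x) = 0 := by
  have hW : ∀ x ∈ Icc a b, HasDerivWithinAt (fun y => h₁' y * h₂ y - h₂' y * h₁ y)
      ((q₁ x - q₂ x) * (h₁ x * h₂ x)) (Icc a b) x := fun x hx =>
    (((hh₁.hasDerivWithinAt_deriv x hx).mul (hh₂.hasDerivWithinAt x hx)).sub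
      ((hh₂.hasDerivWithinAt_deriv x hx).mul (hh₁.hasDerivWithinAt x hx))).congr_deriv (by ring)
  rw [integral_eq_sub_of_hasDerivWithinAt_Icc hab hW
    ((hq₁.sub hq₂).mul (hh₁.continuousOn.mul hh₂.continuousOn))]
  simp [hh₁.apply_left, hh₁.apply_right, hh₂.apply_left, hh₂.apply_right]

theorem integral_mul_sq_le {β ρ h₁ h₁' h₂ h₂' : ℝ → ℝ} {v₁ v₂ K R M : ℝ} (hab : a ≤ b)
    (hβ : ContinuousOn β (Icc a b)) (hρ : ContinuousOn ρ (Icc a b))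
    (hh₁ : IsDirichletSolution (fun x => β x - v₁ * ρ x) h₁ h₁' a b)
    (hh₂ : IsDirichletSolution (fun x => β x - v₂ * ρ x) h₂ h₂' a b)
    (ha' : h₁' a = h₂' a) (hne : v₁ ≠ v₂) (hK : 1 ≤ K)
    (hp₁ : ∀ x ∈ Icc a b, |β x - v₁ * ρ x| ≤ K) (hR : ∀ x ∈ Icc a b, |ρ x| ≤ R)
    (hM₁ : ∀ x ∈ Icc a b, |h₁ x| ≤ M) (hM₂ : ∀ x ∈ Icc a b, |h₂ x| ≤ M) :
    ∫ x in a..b, ρ x * h₁ x ^ 2 ≤ |v₁ - v₂| * R ^ 2 * M ^ 2 * Real.exp (K * (b - a)) * (b - a) := by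
  have hq : ∀ v : ℝ, ContinuousOn (fun x => β x - v * ρ x) (Icc a b) := fun v =>
    hβ.sub (continuousOn_const.mul hρ)
  have horth : ∫ x in a..b, ρ x * (h₁ x * h₂ x) = 0 := by
    have hW := hh₁.integral_sub_mul_mul_eq_zero hab hh₂ (hq v₁) (hq v₂)
    simp only [show ∀ x, β x - v₁ * ρ x - (β x - v₂ * ρ x) = (v₂ - v₁) * ρ x by intro; ring,
      mul_assoc, intervalIntegral.integral_const_mul] at hW
    exact (mul_eq_zero.1 hW).resolve_left (sub_ne_zero.2 hne.symm)
  have hclose := hh₁.abs_sub_le hh₂.toIsSolution hK hp₁ (η := |v₁ - v₂| * R)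
    (fun x hx => by
      rw [show β x - v₁ * ρ x - (β x - v₂ * ρ x) = (v₂ - v₁) * ρ x by ring, abs_mul,
        abs_sub_comm]
      exact mul_le_mul_of_nonneg_left (hR x hx) (abs_nonneg _))
    hM₂ (by rw [hh₁.apply_left, hh₂.apply_left]) ha'
  have hint : ∀ {f : ℝ → ℝ}, ContinuousOn f (Icc a b) → IntervalIntegrable f volume a b :=
    fun hf => hf.intervalIntegrable_of_Icc hab
  calc ∫ x in a..b, ρ x * h₁ x ^ 2
      = ∫ x in a..b, ρ x * h₁ x * (h₁ x - h₂ x) := by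
        rw [← sub_zero (∫ x in a..b, ρ x * h₁ x ^ 2), ← horth,
          ← intervalIntegral.integral_sub (hint (f := fun x => ρ x * h₁ x ^ 2)
            (hρ.mul (hh₁.continuousOn.pow 2)))
            (hint (f := fun x => ρ x * (h₁ x * h₂ x))
              (hρ.mul (hh₁.continuousOn.mul hh₂.continuousOn)))]
        congr 1 with x
        ring
    _ ≤ ‖∫ x in a..b, ρ x * h₁ x * (h₁ x - h₂ x)‖ := le_abs_self _
    _ ≤ R * M * (|v₁ - v₂| * R * M * Real.exp (K * (b - a))) * |b - a| := by
        refine intervalIntegral.norm_integral_le_of_norm_le_const fun x hx => ?_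
        have hx' : x ∈ Icc a b := by
          rw [uIoc_of_le hab] at hx
          exact Ioc_subset_Icc_self hx
        rw [Real.norm_eq_abs, abs_mul, abs_mul]
        have hR0 : 0 ≤ R := (abs_nonneg _).trans (hR x hx')
        have hM0 : 0 ≤ M := (abs_nonneg _).trans (hM₁ x hx')
        exact mul_le_mul (mul_le_mul (hR x hx') (hM₁ x hx') (abs_nonneg _) hR0) (hclose x hx')
          (abs_nonneg _) (mul_nonneg hR0 hM0)
    _ = |v₁ - v₂| * R ^ 2 * M ^ 2 * Real.exp (K * (b - a)) * (b - a) := by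
        rw [abs_of_nonneg (sub_nonneg.2 hab)]
        ring

end IsDirichletSolution

theorem exists_one_le_forall_abs_sub_mul_le {s : Set ℝ} (hs : IsCompact s) {f g : ℝ → ℝ}
    (hf : ContinuousOn f s) (hg : ContinuousOn g s) (v₀ : ℝ) :
    ∃ K, 1 ≤ K ∧ ∀ v, |v - v₀| ≤ 1 → ∀ x ∈ s, |f x - v * g x| ≤ K := by
  obtain ⟨A, hA⟩ := hs.exists_bound_of_continuousOn hf
  obtain ⟨B, hB⟩ := hs.exists_bound_of_continuousOn hg
  refine ⟨max 1 (A + (|v₀| + 1) * B), le_max_left _ _, fun v hv x hx => ?_⟩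
  have hv' : |v| ≤ |v₀| + 1 := by linarith [abs_sub_abs_le_abs_sub v v₀]
  have hgx : |g x| ≤ B := hB x hx
  calc |f x - v * g x| ≤ |f x| + |v| * |g x| := by rw [← abs_mul]; exact abs_sub _ _
    _ ≤ A + (|v₀| + 1) * B := by
        gcongr
        exact hA x hx
    _ ≤ max 1 (A + (|v₀| + 1) * B) := le_max_right _ _

section Sigma0

variable {α β : ℝ → ℝ}

theorem exists_isDirichletSolution_of_mem_Sigma0 {w : ℂ} (hw : w ∈ Sigma0 α β) :
    ∃ g g' : ℝ → ℂ, IsDirichletSolution (fun x => (β x : ℂ) - w * (α x : ℂ) ^ 2) g g' (-1) 1 ∧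
      ∃ x ∈ Icc (-1 : ℝ) 1, g x ≠ 0 := by
  obtain ⟨g, hg, hne, hg_left, hg_right, heq⟩ := hw
  refine ⟨g, _, ⟨IsSolution.of_contDiffOn (by norm_num) hg fun x hx => ?_, hg_left, hg_right⟩, hne⟩
  linear_combination -heq x hx

variable (hα : ContinuousOn α (Icc (-1) 1)) (hβ : ContinuousOn β (Icc (-1) 1))
include hα hβ

theorem im_eq_zero_of_mem_Sigma0 (hα0 : ∀ x ∈ Icc (-1 : ℝ) 1, α x ≠ 0) {w : ℂ}
    (hw : w ∈ Sigma0 α β) : w.im = 0 := by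
  obtain ⟨g, g', hg, x₀, hx₀, hgx₀⟩ := exists_isDirichletSolution_of_mem_Sigma0 hw
  have hq : ∀ z : ℂ, ContinuousOn (fun x => (β x : ℂ) - z * (α x : ℂ) ^ 2) (Icc (-1) 1) :=
    fun z => (Complex.continuous_ofReal.comp_continuousOn hβ).sub
      (continuousOn_const.mul ((Complex.continuous_ofReal.comp_continuousOn hα).pow 2))
  have hg_conj : IsDirichletSolution (fun x => (β x : ℂ) - star w * (α x : ℂ) ^ 2)
      (fun x => star (g x)) (fun x => star (g' x)) (-1) 1 :=
    ⟨by simpa using hg.star, by simp [hg.apply_left], by simp [hg.apply_right]⟩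
  have hW := hg.integral_sub_mul_mul_eq_zero (by norm_num) hg_conj (hq w) (hq (star w))
  have hpos : 0 < ∫ x in (-1 : ℝ)..1, α x ^ 2 * Complex.normSq (g x) := by
    refine intervalIntegral.integral_pos (by norm_num)
      ((hα.pow 2).mul (Complex.continuous_normSq.comp_continuousOn hg.continuousOn))
      (fun x _ => mul_nonneg (sq_nonneg _) (Complex.normSq_nonneg _)) ⟨x₀, hx₀, ?_⟩
    have := hα0 x₀ hx₀
    exact mul_pos (by positivity) (Complex.normSq_pos.2 hgx₀)
  have hintegrand : ∀ x, ((β x : ℂ) - w * (α x : ℂ) ^ 2 - ((β x : ℂ) - star w * (α x : ℂ) ^ 2))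
      * (g x * star (g x)) = (star w - w) * ((α x ^ 2 * Complex.normSq (g x) : ℝ) : ℂ) := by
    intro x
    rw [Complex.star_def, Complex.mul_conj]
    push_cast
    ring
  simp only [hintegrand, intervalIntegral.integral_const_mul, intervalIntegral.integral_ofReal,
    mul_eq_zero, Complex.ofReal_eq_zero, hpos.ne', or_false, sub_eq_zero] at hW
  exact Complex.conj_eq_iff_im.1 hW

theorem exists_normalized_of_ofReal_mem_Sigma0 {v : ℝ} (hv : (v : ℂ) ∈ Sigma0 α β) :
    ∃ h h' : ℝ → ℝ, IsDirichletSolution (fun x => β x - v * α x ^ 2) h h' (-1) 1 ∧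
      h' (-1) = 1 := by
  obtain ⟨g, g', hg, x₀, hx₀, hgx₀⟩ := exists_isDirichletSolution_of_mem_Sigma0 hv
  obtain ⟨L, hL⟩ := SeparatingDual.exists_ne_zero (R := ℝ) hgx₀
  have hu : IsSolution (fun x => β x - v * α x ^ 2) (fun x => L (g x)) (fun x => L (g' x))
      (Icc (-1) 1) := IsSolution.comp_clm (by simpa using hg.toIsSolution) L
  have hu' : L (g' (-1)) ≠ 0 := fun h0 => hL <|
    hu.eq_zero_of_eq_zero_of_deriv_eq_zero (hβ.sub (continuousOn_const.mul (hα.pow 2)))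
      (by simp [hg.apply_left]) h0 x₀ hx₀
  exact ⟨_, _, ⟨hu.const_mul (L (g' (-1)))⁻¹, by simp [hg.apply_left], by simp [hg.apply_right]⟩,
    inv_mul_cancel₀ hu'⟩

theorem exists_pos_forall_eq_of_ofReal_mem_Sigma0 (hα0 : ∀ x ∈ Icc (-1 : ℝ) 1, α x ≠ 0)
    (v₀ : ℝ) : ∃ r > 0, ∀ v₁ v₂ : ℝ, (v₁ : ℂ) ∈ Sigma0 α β → (v₂ : ℂ) ∈ Sigma0 α β →
      |v₁ - v₀| < r → |v₂ - v₀| < r → v₁ = v₂ := by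
  obtain ⟨x₁, hx₁, hmin⟩ :=
    isCompact_Icc.exists_isMinOn (nonempty_Icc.2 (by norm_num)) (hα.pow 2)
  obtain ⟨R, hR⟩ := isCompact_Icc.exists_bound_of_continuousOn (hα.pow 2)
  obtain ⟨K, hK, hpK⟩ := exists_one_le_forall_abs_sub_mul_le isCompact_Icc hβ (hα.pow 2) v₀
  set m := α x₁ ^ 2
  set M := Real.exp (K * (1 - -1))
  set δ := 1 / (2 * K * M)
  set D := R ^ 2 * M ^ 2 * M * (1 - -1)
  set r := min 1 (m * (δ ^ 3 / 12) / D / 2)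
  have hm : 0 < m := by have := hα0 x₁ hx₁; positivity
  have hM : 1 ≤ M := Real.one_le_exp (by linarith)
  have hδ₀ : 0 < δ := by positivity
  have hδ : δ ≤ 1 := by
    rw [div_le_one (by positivity)]
    nlinarith
  have hKMδ : K * M * δ = 1 / 2 := by
    simp only [δ]
    field_simp
  have hD : 0 < D := by
    have : 0 < R := hm.trans_le (by simpa using hR x₁ hx₁)
    positivity
  refine ⟨r, by positivity, fun v₁ v₂ hv₁ hv₂ hvr₁ hvr₂ => ?_⟩
  by_contra hne
  have hp : ∀ v : ℝ, |v - v₀| < r → ∀ x ∈ Icc (-1 : ℝ) 1, |β x - v * α x ^ 2| ≤ K :=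
    fun v hv => hpK v (hv.le.trans (min_le_left _ _))
  obtain ⟨h₁, h₁', hh₁, hh₁'⟩ := exists_normalized_of_ofReal_mem_Sigma0 hα hβ hv₁
  obtain ⟨h₂, h₂', hh₂, hh₂'⟩ := exists_normalized_of_ofReal_mem_Sigma0 hα hβ hv₂
  have hM₁ := hh₁.abs_le (δ := 1) hK (hp v₁ hvr₁) (by simp [hh₁.apply_left]) (by simp [hh₁'])
  have hM₂ := hh₂.abs_le (δ := 1) hK (hp v₂ hvr₂) (by simp [hh₂.apply_left]) (by simp [hh₂'])
  simp only [one_mul] at hM₁ hM₂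
  have hlow := hh₁.mul_div_le_integral_mul_sq (c := -1 + δ) (by linarith [hδ₀]) (by linarith)
    (hα.pow 2) hm.le (fun x hx => hmin hx) (hp v₁ hvr₁) hM₁
    (by rw [add_sub_cancel_left, hKMδ]) hh₁.apply_left hh₁'
  have hup := hh₁.integral_mul_sq_le (by norm_num) hβ (hα.pow 2) hh₂ (hh₁'.trans hh₂'.symm)
    hne hK (hp v₁ hvr₁) (by simpa using hR) hM₁ hM₂
  have hv : |v₁ - v₂| * D < m * (δ ^ 3 / 12) := by
    rw [← lt_div_iff₀ hD]
    linarith [abs_sub_le v₁ v₀ v₂, abs_sub_comm v₀ v₂, min_le_right 1 (m * (δ ^ 3 / 12) / D / 2)]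
  rw [add_sub_cancel_left] at hlow
  linarith

end Sigma0

/-- for continuous `α, β : [-1,1] → ℝ` with `α` nonvanishing, the set `Σ₀`
is discrete in `ℂ`: every `w ∈ ℂ` has an open neighborhood containing at most one point
of `Σ₀`. -/
theorem stmt4 (α β : ℝ → ℝ)
    (hα : ContinuousOn α (Icc (-1) 1)) (hβ : ContinuousOn β (Icc (-1) 1))
    (hα0 : ∀ x ∈ Icc (-1 : ℝ) 1, α x ≠ 0) :
    ∀ w : ℂ, ∃ U : Set ℂ, IsOpen U ∧ w ∈ U ∧ (Sigma0 α β ∩ U).Subsingleton := by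
  intro w
  obtain ⟨r, hr, hsep⟩ := exists_pos_forall_eq_of_ofReal_mem_Sigma0 hα hβ hα0 w.re
  refine ⟨Metric.ball w r, Metric.isOpen_ball, Metric.mem_ball_self hr, ?_⟩
  have hreal : ∀ z ∈ Sigma0 α β ∩ Metric.ball w r, (z.re : ℂ) ∈ Sigma0 α β ∧ |z.re - w.re| < r ∧
      (z.re : ℂ) = z := fun z ⟨hz, hzr⟩ => by
    have hz_re : (z.re : ℂ) = z := Complex.ext rfl (by simp [im_eq_zero_of_mem_Sigma0 hα hβ hα0 hz])
    refine ⟨hz_re ▸ hz, ?_, hz_re⟩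
    simpa using (Complex.abs_re_le_norm (z - w)).trans_lt (mem_ball_iff_norm.1 hzr)
  intro z₁ hz₁ z₂ hz₂
  obtain ⟨hz₁_mem, hz₁r, hz₁_re⟩ := hreal z₁ hz₁
  obtain ⟨hz₂_mem, hz₂r, hz₂_re⟩ := hreal z₂ hz₂
  rw [← hz₁_re, ← hz₂_re, hsep _ _ hz₁_mem hz₂_mem hz₁r hz₂r]
end

section
/- Let f : ℝ → ℂ be continuous with compact support contained in (0,∞). Then ∫_0^∞ |f(t)|² dt = (1/(2π)) ∫_ℝ |M f(1/2 + iτ)|² dτ, where M f(s) = ∫_0^∞ t^{s-1} f(t) dt is the Mellin transform. -/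
/-!
Under the substitution `t = e^{-u}`, the function `g u = e^{-u/2} f(e^{-u})` satisfies
`∫ |g|² = ∫_0^∞ |f|²`, and the Mellin transform of `f` on the line `Re s = 1/2` is the Fourier
transform of `g`: `M f(1/2 + iτ) = ĝ(τ / 2π)`. Since `g` is continuous with compact support, it
lies in `L¹ ∩ L²`. There the `L²` Fourier transform (the isometric extension from Schwartz
functions) agrees with the Fourier integral, as both define the same tempered distribution, so
`∫ |ĝ|² = ∫ |g|²`; the factor `2π` comes from rescaling `τ`.
-/

open MeasureTheory Complex Real Set
open scoped FourierTransform SchwartzMap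

section Plancherel

variable {V F : Type*} [NormedAddCommGroup V] [InnerProductSpace ℝ V] [FiniteDimensional ℝ V]
  [MeasurableSpace V] [BorelSpace V]
  [NormedAddCommGroup F] [InnerProductSpace ℂ F] [CompleteSpace F]

theorem MeasureTheory.Lp.norm_sq_eq_integral_norm_sq {α E : Type*} [MeasurableSpace α]
    {μ : Measure α} [NormedAddCommGroup E] (u : Lp E 2 μ) : ‖u‖ ^ 2 = ∫ x, ‖u x‖ ^ 2 ∂μ := by
  rw [Lp.norm_def, MemLp.eLpNorm_eq_integral_rpow_norm two_ne_zero ENNReal.ofNat_ne_top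
    (Lp.memLp u), ENNReal.toReal_ofReal (by positivity)]
  norm_num [← sqrt_eq_rpow, sq_sqrt (integral_nonneg fun x => sq_nonneg ‖u x‖)]

theorem Real.integral_fourier_smul_eq {φ : V → ℂ} {f : V → F} (hφ : Integrable φ)
    (hf : Integrable f) : ∫ x, 𝓕 φ x • f x = ∫ ξ, φ ξ • 𝓕 f ξ := by
  have := VectorFourier.integral_fourierIntegral_smul_eq_flip (L := innerₗ V)
    continuous_fourierChar continuous_inner hφ hf
  rwa [flip_innerₗ] at this

theorem MeasureTheory.MemLp.fourier_toLp_ae_eq {f : V → F} (hf : Integrable f)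
    (hf₂ : MemLp f 2) :
    ((𝓕 (hf₂.toLp f) : Lp F 2 (volume : Measure V)) : V → F) =ᵐ[volume] 𝓕 f := by
  apply ae_eq_of_integral_contDiff_smul_eq
  · exact (Lp.memLp _).locallyIntegrable (by norm_num)
  · exact (VectorFourier.fourierIntegral_continuous continuous_fourierChar continuous_inner
      hf).locallyIntegrable
  · intro φ hφ hφc
    have hψc : HasCompactSupport (Complex.ofRealCLM ∘ φ) := hφc.comp_left rfl
    set ψ := hψc.toSchwartzMap (by fun_prop)
    have integral_ψ_smul (v : V → F) : ∫ x, ψ x • v x = ∫ x, φ x • v x := by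
      simp [ψ, Complex.coe_smul]
    calc ∫ x, φ x • (𝓕 (hf₂.toLp f) : Lp F 2 (volume : Measure V)) x
        = ((𝓕 (hf₂.toLp f) : Lp F 2 (volume : Measure V)) : 𝓢'(V, F)) ψ := by
          rw [Lp.toTemperedDistribution_apply, integral_ψ_smul]
      _ = 𝓕 (hf₂.toLp f : 𝓢'(V, F)) ψ := by
          rw [Lp.fourier_toTemperedDistribution_eq]
      _ = ∫ x, 𝓕 ψ x • f x := by
          rw [TemperedDistribution.fourier_apply, Lp.toTemperedDistribution_apply]
          refine integral_congr_ae ?_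
          filter_upwards [hf₂.coeFn_toLp] with x hx
          rw [hx]
      _ = ∫ x, φ x • 𝓕 f x := by
          rw [SchwartzMap.fourier_coe, integral_fourier_smul_eq ψ.integrable hf, integral_ψ_smul]

theorem MeasureTheory.Integrable.integral_norm_sq_fourier {f : V → F} (hf : Integrable f)
    (hf₂ : MemLp f 2) : ∫ ξ, ‖𝓕 f ξ‖ ^ 2 = ∫ x, ‖f x‖ ^ 2 := by
  calc ∫ ξ, ‖𝓕 f ξ‖ ^ 2
      = ∫ ξ, ‖(𝓕 (hf₂.toLp f) : Lp F 2 (volume : Measure V)) ξ‖ ^ 2 := by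
        refine integral_congr_ae ?_
        filter_upwards [hf₂.fourier_toLp_ae_eq hf] with ξ hξ
        rw [hξ]
    _ = ‖hf₂.toLp f‖ ^ 2 := by
        rw [← Lp.norm_fourier_eq, Lp.norm_sq_eq_integral_norm_sq]
    _ = ∫ x, ‖f x‖ ^ 2 := by
        rw [Lp.norm_sq_eq_integral_norm_sq]
        refine integral_congr_ae ?_
        filter_upwards [hf₂.coeFn_toLp] with x hx
        rw [hx]

end Plancherel

section Mellin

theorem integral_comp_exp_smul {G : Type*} [NormedAddCommGroup G] [NormedSpace ℝ G]
    (h : ℝ → G) : ∫ u, rexp u • h (rexp u) = ∫ t in Ioi 0, h t := by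
  rw [← Real.range_exp, ← image_univ, integral_image_eq_integral_abs_deriv_smul
    MeasurableSet.univ (fun x _ => (Real.hasDerivAt_exp x).hasDerivWithinAt)
    Real.exp_injective.injOn, setIntegral_univ]
  simp [abs_of_pos (Real.exp_pos _)]

theorem HasCompactSupport.comp_exp_neg {M : Type*} [Zero M] {f : ℝ → M}
    (hf : HasCompactSupport f) (hpos : tsupport f ⊆ Ioi 0) :
    HasCompactSupport (fun u => f (rexp (-u))) := by
  refine HasCompactSupport.intro (hf.image_of_continuousOn
    (continuousOn_log.mono fun t ht => (hpos ht).ne').neg) fun u hu => ?_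
  by_contra hfu
  exact hu ⟨rexp (-u), subset_tsupport f hfu, by simp⟩

variable {E : Type*} [NormedAddCommGroup E] [NormedSpace ℂ E]

noncomputable def mellinToFourier (σ : ℝ) (f : ℝ → E) (u : ℝ) : E :=
  rexp (-σ * u) • f (rexp (-u))

theorem mellin_eq_fourier_mellinToFourier (f : ℝ → E) (s : ℂ) :
    mellin f s = 𝓕 (mellinToFourier s.re f) (s.im / (2 * π)) :=
  mellin_eq_fourier f

theorem Continuous.mellinToFourier {f : ℝ → E} (hf : Continuous f) (σ : ℝ) :
    Continuous (mellinToFourier σ f) := by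
  unfold _root_.mellinToFourier; fun_prop

theorem HasCompactSupport.mellinToFourier {f : ℝ → E} (hf : HasCompactSupport f)
    (hpos : tsupport f ⊆ Ioi 0) (σ : ℝ) : HasCompactSupport (mellinToFourier σ f) :=
  (hf.comp_exp_neg hpos).smul_left

theorem integral_norm_sq_mellinToFourier_half (f : ℝ → E) :
    ∫ u, ‖mellinToFourier (1 / 2) f u‖ ^ 2 = ∫ t in Ioi 0, ‖f t‖ ^ 2 := by
  rw [← integral_comp_exp_smul, ← integral_neg_eq_self]
  congr 1 with u
  rw [mellinToFourier, norm_smul, mul_pow, Real.norm_of_nonneg (Real.exp_pos _).le,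
    ← Real.exp_nat_mul, smul_eq_mul]
  ring_nf

theorem integral_norm_sq_mellin_vertical (σ : ℝ) (f : ℝ → E) :
    ∫ τ : ℝ, ‖mellin f (σ + τ * I)‖ ^ 2 = 2 * π * ∫ ξ, ‖𝓕 (mellinToFourier σ f) ξ‖ ^ 2 := by
  simp_rw [mellin_eq_fourier_mellinToFourier]
  simp only [add_re, ofReal_re, mul_re, I_re, mul_zero, ofReal_im, I_im, mul_one, sub_self,
    add_zero, add_im, mul_im, zero_add]
  rw [Measure.integral_comp_div (fun ξ => ‖𝓕 (mellinToFourier σ f) ξ‖ ^ 2),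
    abs_of_pos (by positivity), smul_eq_mul]

end Mellin

/-- Plancherel for the Mellin transform on the line `Re s = 1/2`: if
`f : ℝ → ℂ` is continuous with compact support contained in `(0,∞)`, then
`∫_0^∞ |f(t)|² dt = (1/2π) ∫_ℝ |Mf(1/2 + iτ)|² dτ`. -/
theorem stmt10 (f : ℝ → ℂ) (hf : Continuous f) (hsupp : HasCompactSupport f)
    (hpos : tsupport f ⊆ Set.Ioi (0 : ℝ)) :
    ∫ t in Set.Ioi (0 : ℝ), ‖f t‖ ^ 2 =
      (1 / (2 * Real.pi)) * ∫ τ : ℝ, ‖mellin f (1 / 2 + τ * I)‖ ^ 2 := by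
  have hg := hf.mellinToFourier (1 / 2)
  have hgs := hsupp.mellinToFourier hpos (1 / 2)
  have hvert := integral_norm_sq_mellin_vertical (1 / 2) f
  push_cast at hvert
  rw [hvert, (hg.integrable_of_hasCompactSupport hgs).integral_norm_sq_fourier
    (hg.memLp_of_hasCompactSupport hgs), integral_norm_sq_mellinToFourier_half]
  field_simp
end

section
/- Let n ≥ 1, let B ⊂ ℝⁿ be a closed ball of positive radius, and let φ : ℝⁿ → ℝ be continuous with support contained in B and ∫_B φ ≠ 0. Then there exists a constant C < ∞ such that for every continuously differentiable u : ℝⁿ → ℝ satisfying ∫_B u·φ = 0, one has ∫_B |u|² ≤ C·∫_B |∇u|². -/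
/-!
Since `∫_B φ ≠ 0`, the condition `∫_B u φ = 0` gives `u x * ∫_B φ = ∫_B (u x - u y) φ y dy`,
so by Cauchy–Schwarz `∫_B u²` is controlled by the oscillation `∫∫_{B×B} |u x - u y|²`.
Writing `u x - u y` as the integral of `Du` along the segment from `y` to `x` and applying
Cauchy–Schwarz once more bounds the oscillation by `(2R)² ∫₀¹ ∫∫_{B×B} ‖Du((1-t)y + tx)‖²`.
For `t ≤ 1/2` the substitution `y ↦ (1-t)y + tx`, and for `t ≥ 1/2` the substitution
`x ↦ (1-t)y + tx`, maps `B` into itself with Jacobian at least `2⁻ⁿ`, so every slice is at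
most `2ⁿ |B| ∫_B ‖Du‖²`.
-/

open MeasureTheory Set Module Filter

theorem sq_setIntegral_le_measureReal_mul_setIntegral_sq {α : Type*} [MeasurableSpace α]
    {μ : Measure α} {s : Set α} {f : α → ℝ} (hs : μ s ≠ ⊤) (hf : IntegrableOn f s μ)
    (hf2 : IntegrableOn (fun a => f a ^ 2) s μ) :
    (∫ a in s, f a ∂μ) ^ 2 ≤ μ.real s * ∫ a in s, f a ^ 2 ∂μ := by
  rcases eq_or_ne (μ s) 0 with h0 | h0
  · simp [Measure.restrict_eq_zero.2 h0]
  have hm : 0 < μ.real s := ENNReal.toReal_pos h0 hs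
  have hJ := (even_two.convexOn_pow (𝕜 := ℝ)).map_set_average_le (continuousOn_pow 2)
    isClosed_univ h0 hs (Eventually.of_forall fun _ => mem_univ _) hf hf2
  simp only [setAverage_eq, smul_eq_mul, mul_pow] at hJ
  have := mul_le_mul_of_nonneg_left hJ (sq_nonneg (μ.real s))
  field_simp at this
  linarith

section Segment

variable {E F : Type*} [NormedAddCommGroup E] [NormedSpace ℝ E]
  [NormedAddCommGroup F] [NormedSpace ℝ F] [CompleteSpace F]

theorem norm_sub_le_norm_sub_mul_integral_norm_fderiv {u : E → F} (hu : ContDiff ℝ 1 u)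
    (x y : E) :
    ‖u x - u y‖ ≤ ‖x - y‖ * ∫ t in Icc (0 : ℝ) 1, ‖fderiv ℝ u ((1 - t) • y + t • x)‖ := by
  have hline : ∀ t : ℝ, HasDerivAt (fun s : ℝ => u ((1 - s) • y + s • x))
      (fderiv ℝ u ((1 - t) • y + t • x) (x - y)) t := by
    intro t
    have hγ : HasDerivAt (fun s : ℝ => (1 - s) • y + s • x) ((-1 : ℝ) • y + (1 : ℝ) • x) t :=
      (((hasDerivAt_id t).const_sub 1).smul_const y).add ((hasDerivAt_id t).smul_const x)
    rw [neg_one_smul, one_smul, neg_add_eq_sub] at hγ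
    exact ((hu.differentiable one_ne_zero _).hasFDerivAt).comp_hasDerivAt t hγ
  have hDu : Continuous fun t : ℝ => fderiv ℝ u ((1 - t) • y + t • x) :=
    (hu.continuous_fderiv one_ne_zero).comp (by fun_prop)
  have hFTC : u x - u y = ∫ t in (0 : ℝ)..1, fderiv ℝ u ((1 - t) • y + t • x) (x - y) := by
    rw [intervalIntegral.integral_eq_sub_of_hasDerivAt (fun t _ => hline t)
      ((hDu.clm_apply continuous_const).intervalIntegrable 0 1)]
    simp
  calc ‖u x - u y‖
      ≤ ∫ t in (0 : ℝ)..1, ‖fderiv ℝ u ((1 - t) • y + t • x)‖ * ‖x - y‖ := by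
        rw [hFTC]
        exact intervalIntegral.norm_integral_le_of_norm_le zero_le_one
          (Eventually.of_forall fun t _ => ContinuousLinearMap.le_opNorm _ _)
          ((hDu.norm.mul continuous_const).intervalIntegrable 0 1)
    _ = ‖x - y‖ * ∫ t in Icc (0 : ℝ) 1, ‖fderiv ℝ u ((1 - t) • y + t • x)‖ := by
        rw [intervalIntegral.integral_mul_const, intervalIntegral.integral_of_le zero_le_one,
          integral_Icc_eq_integral_Ioc, mul_comm]

theorem norm_sub_sq_le_norm_sub_sq_mul_integral_norm_fderiv_sq {u : E → F}
    (hu : ContDiff ℝ 1 u) (x y : E) :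
    ‖u x - u y‖ ^ 2
      ≤ ‖x - y‖ ^ 2 * ∫ t in Icc (0 : ℝ) 1, ‖fderiv ℝ u ((1 - t) • y + t • x)‖ ^ 2 := by
  have hg : Continuous fun t : ℝ => ‖fderiv ℝ u ((1 - t) • y + t • x)‖ :=
    ((hu.continuous_fderiv one_ne_zero).comp (by fun_prop)).norm
  have hCS := sq_setIntegral_le_measureReal_mul_setIntegral_sq (μ := volume)
    (s := Icc (0 : ℝ) 1) (by simp) (hg.continuousOn.integrableOn_compact isCompact_Icc)
    ((hg.pow 2).continuousOn.integrableOn_compact isCompact_Icc)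
  rw [Real.volume_real_Icc_of_le zero_le_one, sub_zero, one_mul] at hCS
  calc ‖u x - u y‖ ^ 2
      ≤ (‖x - y‖ * ∫ t in Icc (0 : ℝ) 1, ‖fderiv ℝ u ((1 - t) • y + t • x)‖) ^ 2 :=
        pow_le_pow_left₀ (norm_nonneg _) (norm_sub_le_norm_sub_mul_integral_norm_fderiv hu x y) 2
    _ ≤ _ := by rw [mul_pow]; gcongr

section Haar

variable [FiniteDimensional ℝ E] [MeasurableSpace E] [BorelSpace E] (μ : Measure E)
  [μ.IsAddHaarMeasure]

theorem setIntegral_comp_smul_add_le {f : E → ℝ} {s t : Set E} (hs : MeasurableSet s)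
    (ht : MeasurableSet t) (hf : IntegrableOn f t μ) (hf0 : ∀ z ∈ t, 0 ≤ f z) {c : ℝ}
    (hc : 0 < c) {v : E} (hst : ∀ w ∈ s, c • w + v ∈ t) :
    ∫ w in s, f (c • w + v) ∂μ ≤ (c ^ finrank ℝ E)⁻¹ * ∫ z in t, f z ∂μ := by
  set G := t.indicator f
  have hG0 : 0 ≤ G := indicator_nonneg hf0
  have hG : Integrable G μ := hf.integrable_indicator ht
  calc ∫ w in s, f (c • w + v) ∂μ = ∫ w in s, G (c • w + v) ∂μ :=
        setIntegral_congr_fun hs fun w hw => (indicator_of_mem (hst w hw) f).symm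
    _ ≤ ∫ w, G (c • w + v) ∂μ :=
        setIntegral_le_integral ((hG.comp_add_right v).comp_smul hc.ne')
          (Eventually.of_forall fun w => hG0 (c • w + v))
    _ = (c ^ finrank ℝ E)⁻¹ * ∫ z, G z ∂μ := by
        rw [Measure.integral_comp_smul μ (fun w => G (w + v)), integral_add_right_eq_self,
          abs_of_pos (by positivity), smul_eq_mul]
    _ = (c ^ finrank ℝ E)⁻¹ * ∫ z in t, f z ∂μ := by rw [integral_indicator ht]

theorem setIntegral_comp_convexCombination_le {s : Set E} (hs : Convex ℝ s)
    (hsm : MeasurableSet s) {g : E → ℝ} (hg : IntegrableOn g s μ) (hg0 : ∀ z ∈ s, 0 ≤ g z)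
    {c : ℝ} (hc : 1 / 2 ≤ c) (hc1 : c ≤ 1) {x : E} (hx : x ∈ s) :
    ∫ w in s, g (c • w + (1 - c) • x) ∂μ ≤ 2 ^ finrank ℝ E * ∫ z in s, g z ∂μ := by
  have hc0 : 0 < c := by linarith
  have hinv : (c ^ finrank ℝ E)⁻¹ ≤ 2 ^ finrank ℝ E := by
    rw [← inv_pow]
    exact pow_le_pow_left₀ (by positivity) (inv_le_of_inv_le₀ two_pos (by linarith)) _
  calc ∫ w in s, g (c • w + (1 - c) • x) ∂μ ≤ (c ^ finrank ℝ E)⁻¹ * ∫ z in s, g z ∂μ :=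
        setIntegral_comp_smul_add_le μ hsm hsm hg hg0 hc0
          fun w hw => hs hw hx hc0.le (by linarith) (by ring)
    _ ≤ 2 ^ finrank ℝ E * ∫ z in s, g z ∂μ := by
        gcongr
        exact setIntegral_nonneg hsm hg0

theorem setIntegral_prod_comp_convexCombination_le {s : Set E} (hs : Convex ℝ s)
    (hsc : IsCompact s) {g : E → ℝ} (hg : Continuous g) (hg0 : ∀ z ∈ s, 0 ≤ g z) {t : ℝ}
    (ht0 : 0 ≤ t) (ht1 : t ≤ 1) :
    ∫ p in s ×ˢ s, g ((1 - t) • p.2 + t • p.1) ∂μ.prod μ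
      ≤ 2 ^ finrank ℝ E * (∫ z in s, g z ∂μ) * μ.real s := by
  have hsm := hsc.measurableSet
  have hgs : IntegrableOn g s μ := hg.continuousOn.integrableOn_compact hsc
  have hint : Integrable (fun p : E × E => g ((1 - t) • p.2 + t • p.1))
      ((μ.restrict s).prod (μ.restrict s)) := by
    rw [Measure.prod_restrict]
    exact (by fun_prop : Continuous _).continuousOn.integrableOn_compact (hsc.prod hsc)
  have outer_le {F : E → ℝ}
      (hF : ∀ x ∈ s, 0 ≤ F x ∧ F x ≤ 2 ^ finrank ℝ E * ∫ z in s, g z ∂μ) :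
      ∫ x in s, F x ∂μ ≤ 2 ^ finrank ℝ E * (∫ z in s, g z ∂μ) * μ.real s :=
    (Real.le_norm_self _).trans <| norm_setIntegral_le_of_norm_le_const hsc.measure_lt_top
      fun x hx => (Real.norm_of_nonneg (hF x hx).1).trans_le (hF x hx).2
  rw [← Measure.prod_restrict]
  rcases le_total t (1 / 2) with ht | ht
  · rw [integral_prod _ hint]
    refine outer_le fun x hx => ⟨setIntegral_nonneg hsm fun y hy => hg0 _ ?_, ?_⟩
    · exact hs hy hx (by linarith) ht0 (by ring)
    · simpa only [sub_sub_cancel] using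
        setIntegral_comp_convexCombination_le μ hs hsm hgs hg0 (c := 1 - t) (by linarith)
          (by linarith) hx
  · rw [integral_prod_symm _ hint]
    refine outer_le fun y hy => ⟨setIntegral_nonneg hsm fun x hx => hg0 _ ?_, ?_⟩
    · exact hs hy hx (by linarith) ht0 (by ring)
    · simpa only [add_comm] using
        setIntegral_comp_convexCombination_le μ hs hsm hgs hg0 ht ht1 hy

theorem setIntegral_prod_norm_sub_sq_le {s : Set E} (hs : Convex ℝ s) (hsc : IsCompact s)
    {d : ℝ} (hd : ∀ x ∈ s, ∀ y ∈ s, ‖x - y‖ ≤ d) {u : E → F} (hu : ContDiff ℝ 1 u) :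
    ∫ p in s ×ˢ s, ‖u p.1 - u p.2‖ ^ 2 ∂μ.prod μ
      ≤ d ^ 2 * (2 ^ finrank ℝ E * (∫ z in s, ‖fderiv ℝ u z‖ ^ 2 ∂μ) * μ.real s) := by
  set g : E → ℝ := fun z => ‖fderiv ℝ u z‖ ^ 2
  have hg : Continuous g := (hu.continuous_fderiv one_ne_zero).norm.pow 2
  set H : E × E → ℝ → ℝ := fun p t => g ((1 - t) • p.2 + t • p.1)
  have hH : Continuous H.uncurry := by fun_prop
  have hss := hsc.prod hsc
  have hHint : Integrable H.uncurry
      (((μ.prod μ).restrict (s ×ˢ s)).prod (volume.restrict (Icc (0 : ℝ) 1))) := by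
    rw [Measure.prod_restrict]
    exact hH.continuousOn.integrableOn_compact (hss.prod isCompact_Icc)
  have hHp : Continuous fun p => ∫ t in Icc (0 : ℝ) 1, H p t :=
    continuous_parametric_integral_of_continuous hH isCompact_Icc
  calc ∫ p in s ×ˢ s, ‖u p.1 - u p.2‖ ^ 2 ∂μ.prod μ
      ≤ ∫ p in s ×ˢ s, d ^ 2 * (∫ t in Icc (0 : ℝ) 1, H p t) ∂μ.prod μ := by
        refine setIntegral_mono_on ?_ ?_ hss.measurableSet fun p hp => ?_
        · exact (by fun_prop : Continuous _).continuousOn.integrableOn_compact hss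
        · exact (continuous_const.mul hHp).continuousOn.integrableOn_compact hss
        · refine (norm_sub_sq_le_norm_sub_sq_mul_integral_norm_fderiv_sq hu p.1 p.2).trans ?_
          gcongr
          exact hd _ hp.1 _ hp.2
    _ = d ^ 2 * ∫ t in Icc (0 : ℝ) 1, (∫ p in s ×ˢ s, H p t ∂μ.prod μ) := by
        rw [integral_const_mul, integral_integral_swap hHint]
    _ ≤ d ^ 2 * ∫ t in Icc (0 : ℝ) 1,
          2 ^ finrank ℝ E * (∫ z in s, g z ∂μ) * μ.real s := by
        refine mul_le_mul_of_nonneg_left ?_ (sq_nonneg d)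
        exact setIntegral_mono_on hHint.integral_prod_right
          (integrableOn_const (μ := volume) (by simp)) measurableSet_Icc
          fun t ht => setIntegral_prod_comp_convexCombination_le μ hs hsc hg
            (fun z _ => sq_nonneg _) ht.1 ht.2
    _ = d ^ 2 * (2 ^ finrank ℝ E * (∫ z in s, g z ∂μ) * μ.real s) := by
        simp

end Haar

end Segment

theorem sq_setIntegral_mul_setIntegral_sq_le_of_setIntegral_mul_eq_zero {X : Type*}
    [TopologicalSpace X] [T2Space X] [SecondCountableTopology X] [MeasurableSpace X]
    [OpensMeasurableSpace X]
    (μ : Measure X) [SFinite μ] [IsFiniteMeasureOnCompacts μ] {s : Set X} (hsc : IsCompact s)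
    {u φ : X → ℝ} (hu : Continuous u) (hφ : Continuous φ) {M : ℝ}
    (hM : ∀ y ∈ s, |φ y| ≤ M) (h0 : ∫ y in s, u y * φ y ∂μ = 0) :
    (∫ y in s, φ y ∂μ) ^ 2 * ∫ x in s, u x ^ 2 ∂μ
      ≤ M ^ 2 * μ.real s * ∫ p in s ×ˢ s, (u p.1 - u p.2) ^ 2 ∂μ.prod μ := by
  have hint {f : X → ℝ} (hf : Continuous f) : IntegrableOn f s μ :=
    hf.continuousOn.integrableOn_compact hsc
  have hsm := hsc.measurableSet
  have pointwise (x : X) : (∫ y in s, φ y ∂μ) ^ 2 * u x ^ 2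
      ≤ M ^ 2 * μ.real s * ∫ y in s, (u x - u y) ^ 2 ∂μ := by
    have hshift : u x * ∫ y in s, φ y ∂μ = ∫ y in s, (u x - u y) * φ y ∂μ := by
      simp_rw [sub_mul]
      rw [integral_sub (hint (by fun_prop)) (hint (by fun_prop)), h0, sub_zero,
        integral_const_mul]
    have habs : |u x * ∫ y in s, φ y ∂μ| ≤ M * ∫ y in s, |u x - u y| ∂μ :=
      calc |u x * ∫ y in s, φ y ∂μ| ≤ ∫ y in s, |(u x - u y) * φ y| ∂μ := by
            rw [hshift]; exact abs_integral_le_integral_abs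
        _ ≤ ∫ y in s, M * |u x - u y| ∂μ := by
            refine setIntegral_mono_on (hint (by fun_prop)) (hint (by fun_prop)) hsm
              fun y hy => ?_
            rw [abs_mul, mul_comm]
            exact mul_le_mul_of_nonneg_right (hM y hy) (abs_nonneg _)
        _ = M * ∫ y in s, |u x - u y| ∂μ := integral_const_mul _ _
    have hCS := sq_setIntegral_le_measureReal_mul_setIntegral_sq hsc.measure_lt_top.ne
      (hint (f := fun y => |u x - u y|) (by fun_prop)) (hint (by fun_prop))
    simp only [sq_abs] at hCS
    calc (∫ y in s, φ y ∂μ) ^ 2 * u x ^ 2 = |u x * ∫ y in s, φ y ∂μ| ^ 2 := by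
          rw [sq_abs]; ring
      _ ≤ (M * ∫ y in s, |u x - u y| ∂μ) ^ 2 := pow_le_pow_left₀ (abs_nonneg _) habs 2
      _ ≤ M ^ 2 * (μ.real s * ∫ y in s, (u x - u y) ^ 2 ∂μ) := by
          rw [mul_pow]; gcongr
      _ = M ^ 2 * μ.real s * ∫ y in s, (u x - u y) ^ 2 ∂μ := by ring
  have hint₂ : IntegrableOn (fun p : X × X => (u p.1 - u p.2) ^ 2) (s ×ˢ s) (μ.prod μ) :=
    (by fun_prop : Continuous _).continuousOn.integrableOn_compact (hsc.prod hsc)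
  have hmarg : IntegrableOn (fun x => ∫ y in s, (u x - u y) ^ 2 ∂μ) s μ := by
    rw [IntegrableOn, ← Measure.prod_restrict] at hint₂
    exact hint₂.integral_prod_left
  calc (∫ y in s, φ y ∂μ) ^ 2 * ∫ x in s, u x ^ 2 ∂μ
      = ∫ x in s, (∫ y in s, φ y ∂μ) ^ 2 * u x ^ 2 ∂μ := (integral_const_mul _ _).symm
    _ ≤ ∫ x in s, M ^ 2 * μ.real s * ∫ y in s, (u x - u y) ^ 2 ∂μ ∂μ :=
        setIntegral_mono_on (hint (by fun_prop)) (hmarg.const_mul _) hsm fun x _ => pointwise x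
    _ = M ^ 2 * μ.real s * ∫ p in s ×ˢ s, (u p.1 - u p.2) ^ 2 ∂μ.prod μ := by
        rw [integral_const_mul, setIntegral_prod _ hint₂]

theorem stmt19_general (n : ℕ) (x₀ : EuclideanSpace ℝ (Fin n)) (R : ℝ)
    (φ : EuclideanSpace ℝ (Fin n) → ℝ) (hφc : Continuous φ)
    (hφi : (∫ x in Metric.closedBall x₀ R, φ x) ≠ 0) :
    ∃ C : ℝ, ∀ u : EuclideanSpace ℝ (Fin n) → ℝ, ContDiff ℝ 1 u →
      (∫ x in Metric.closedBall x₀ R, u x * φ x) = 0 →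
      ∫ x in Metric.closedBall x₀ R, (u x) ^ 2
        ≤ C * ∫ x in Metric.closedBall x₀ R, ‖fderiv ℝ u x‖ ^ 2 := by
  set B := Metric.closedBall x₀ R
  have hBc : IsCompact B := isCompact_closedBall x₀ R
  have hdiam : ∀ x ∈ B, ∀ y ∈ B, ‖x - y‖ ≤ 2 * R := fun x hx y hy => by
    rw [← dist_eq_norm]
    linarith [dist_triangle_right x y x₀, Metric.mem_closedBall.1 hx, Metric.mem_closedBall.1 hy]
  obtain ⟨M, hM⟩ := hBc.exists_bound_of_continuousOn hφc.continuousOn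
  set I := ∫ x in B, φ x
  set N := finrank ℝ (EuclideanSpace ℝ (Fin n))
  refine ⟨M ^ 2 * volume.real B * ((2 * R) ^ 2 * 2 ^ N * volume.real B) / I ^ 2,
    fun u hu h0 => ?_⟩
  have hweighted := sq_setIntegral_mul_setIntegral_sq_le_of_setIntegral_mul_eq_zero volume hBc
    hu.continuous hφc (fun y hy => (Real.norm_eq_abs (φ y)).symm.trans_le (hM y hy)) h0
  have hpairs := setIntegral_prod_norm_sub_sq_le volume (convex_closedBall x₀ R) hBc hdiam hu
  simp only [Real.norm_eq_abs, sq_abs] at hpairs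
  have hI : 0 < I ^ 2 := by positivity
  rw [← mul_le_mul_iff_of_pos_left hI]
  calc I ^ 2 * ∫ x in B, u x ^ 2
      ≤ M ^ 2 * volume.real B * ∫ p in B ×ˢ B, (u p.1 - u p.2) ^ 2 ∂volume.prod volume :=
        hweighted
    _ ≤ M ^ 2 * volume.real B *
          ((2 * R) ^ 2 * (2 ^ N * (∫ z in B, ‖fderiv ℝ u z‖ ^ 2) * volume.real B)) :=
        mul_le_mul_of_nonneg_left hpairs (by positivity)
    _ = I ^ 2 * (M ^ 2 * volume.real B * ((2 * R) ^ 2 * 2 ^ N * volume.real B) / I ^ 2 *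
          ∫ x in B, ‖fderiv ℝ u x‖ ^ 2) := by
        field_simp

/-- weighted Poincaré inequality. Let `B ⊂ ℝⁿ` (`n ≥ 1`) be a closed ball of
positive radius and `φ` a continuous function supported in `B` with `∫_B φ ≠ 0`. Then there
is `C < ∞` such that every `C¹` function `u` with `∫_B u·φ = 0` satisfies
`∫_B |u|² ≤ C ∫_B |∇u|²`. -/
theorem stmt19 (n : ℕ) (hn : 1 ≤ n) (x₀ : EuclideanSpace ℝ (Fin n)) (R : ℝ) (hR : 0 < R)
    (φ : EuclideanSpace ℝ (Fin n) → ℝ) (hφc : Continuous φ)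
    (hφs : tsupport φ ⊆ Metric.closedBall x₀ R)
    (hφi : (∫ x in Metric.closedBall x₀ R, φ x) ≠ 0) :
    ∃ C : ℝ, ∀ u : EuclideanSpace ℝ (Fin n) → ℝ, ContDiff ℝ 1 u →
      (∫ x in Metric.closedBall x₀ R, u x * φ x) = 0 →
      ∫ x in Metric.closedBall x₀ R, (u x) ^ 2
        ≤ C * ∫ x in Metric.closedBall x₀ R, ‖fderiv ℝ u x‖ ^ 2 :=
  stmt19_general n x₀ R φ hφc hφi
end
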